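/- arXiv:1812.00533 — 3 statements merged into one kernel-verified Lean document; each statement's English description precedes it below -/
import Mathlib

section
/- Let B be a Ferrers board with n columns whose root vector ξ(B) has maximum entry M, and suppose the first (leftmost) occurrence of M in ξ(B) is in position j. Then the vertex B is connected by a path of edges in the rook equivalence graph G(B) to a Ferrers board B′ whose root vector ξ(B′) agrees with ξ(B) in the first j positions and is weakly decreasing for indices i ≥ j. -/
/-!
Boards whose root vectors are rearrangements of one another are rook equivalent: by the
Goldman–Joichi–White factorization `∑ₖ rₖ(b) · (x)_{n-k} = ∏ᵢ (x - ξᵢ(b))`, proved by removing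
the last column, the root vector determines the rook numbers, because the falling factorials
are linearly independent (evaluate at `x = 0, 1, 2, …`).

Exchanging two entries `ξ p < ξ q` with `p < q` of the root vector amounts to moving
`ξ q - ξ p` squares from column `p` to column `q`, which is an edge of the rook equivalence
graph as long as the result is still a Ferrers board. Each such move strictly decreases
`∑ᵢ (n - i) · bᵢ`, so repeatedly exchanging an out-of-order pair of positions after `j`
terminates, at a board whose root vector is weakly decreasing from `j` on and unchanged up to `j`.
The maximality of `ξ j` is what keeps the exchanged boards Ferrers next to the columns up to `j`.
-/

/-- A (non-attacking) rook placement on the board with column heights `b`: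
a set of cells (column, row) inside the board, no two sharing a column or a row.
Cells are 0-indexed: cell `(i, j)` lies in the board iff `j < b i`. -/
def IsRookPlacement {n : ℕ} (b : Fin n → ℕ) (P : Finset (Fin n × ℕ)) : Prop :=
  (∀ c ∈ P, c.2 < b c.1) ∧
  ∀ c ∈ P, ∀ d ∈ P, c ≠ d → c.1 ≠ d.1 ∧ c.2 ≠ d.2

/-- The `k`-th rook number of the board `b`: the number of placements of `k`
non-attacking rooks on `b`. -/
noncomputable def rookNum {n : ℕ} (b : Fin n → ℕ) (k : ℕ) : ℕ :=
  Set.ncard {P : Finset (Fin n × ℕ) | IsRookPlacement b P ∧ P.card = k}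

/-- Two boards are rook equivalent if all their rook numbers agree. -/
def RookEquiv {n₁ n₂ : ℕ} (b₁ : Fin n₁ → ℕ) (b₂ : Fin n₂ → ℕ) : Prop :=
  ∀ k, rookNum b₁ k = rookNum b₂ k

/-- The root vector of a board: the (0-indexed) `i`-th entry is `i - b i`
(1-indexed: `(i-1) - b_i`). -/
def rootVec {n : ℕ} (b : Fin n → ℕ) : Fin n → ℤ := fun i => (i : ℤ) - (b i : ℤ)

/-- `b₁` is obtained from `b₂` by moving `k > 0` squares out of one column into a
single other column: the boards agree except in columns `i` and `j`, where `b₁`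
has `k` more squares in column `i` and `k` fewer in column `j`. -/
def MovesSquares {n : ℕ} (b₁ b₂ : Fin n → ℕ) : Prop :=
  ∃ (i j : Fin n) (k : ℕ), i ≠ j ∧ 0 < k ∧ b₁ i = b₂ i + k ∧ b₂ j = b₁ j + k ∧
    ∀ l, l ≠ i → l ≠ j → b₁ l = b₂ l

/-- A Ferrers board with `n` columns: a weakly increasing sequence of column heights. -/
def FerrersBoard (n : ℕ) : Type := {b : Fin n → ℕ // Monotone b}

/-- The rook equivalence graph of the equivalence class of `B`: vertices are the
Ferrers boards with `n` columns rook equivalent to `B`; two distinct boards are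
adjacent when one is obtained from the other by moving squares out of one column
into a single other column. -/
def rookEquivGraph {n : ℕ} (B : FerrersBoard n) :
    SimpleGraph {C : FerrersBoard n // RookEquiv C.1 B.1} :=
  SimpleGraph.fromRel fun C D => MovesSquares C.1.1 D.1.1

/-- `entryCount b k` is `v_k`, the number of entries of the root vector of `b`
equal to `k`. -/
def entryCount {n : ℕ} (b : Fin n → ℕ) (k : ℕ) : ℕ :=
  (Finset.univ.filter fun l => rootVec b l = (k : ℤ)).card

open Finset

section Placements

variable {n : ℕ} {b : Fin n → ℕ}

theorem IsRookPlacement.subset {P Q : Finset (Fin n × ℕ)} (hP : IsRookPlacement b P)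
    (hQP : Q ⊆ P) : IsRookPlacement b Q :=
  ⟨fun c hc => hP.1 c (hQP hc), fun c hc d hd h => hP.2 c (hQP hc) d (hQP hd) h⟩

theorem IsRookPlacement.injOn_fst {P : Finset (Fin n × ℕ)} (hP : IsRookPlacement b P) :
    Set.InjOn Prod.fst (P : Set (Fin n × ℕ)) := fun c hc d hd h => by
  by_contra hne
  exact (hP.2 c hc d hd hne).1 h

theorem IsRookPlacement.injOn_snd {P : Finset (Fin n × ℕ)} (hP : IsRookPlacement b P) :
    Set.InjOn Prod.snd (P : Set (Fin n × ℕ)) := fun c hc d hd h => by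
  by_contra hne
  exact (hP.2 c hc d hd hne).2 h

theorem isRookPlacement_insert {P : Finset (Fin n × ℕ)} {c : Fin n × ℕ} (hc : c ∉ P) :
    IsRookPlacement b (insert c P) ↔
      IsRookPlacement b P ∧ c.2 < b c.1 ∧ ∀ d ∈ P, d.1 ≠ c.1 ∧ d.2 ≠ c.2 := by
  constructor
  · intro h
    refine ⟨h.subset (subset_insert c P), h.1 c (mem_insert_self c P), fun d hd => ?_⟩
    exact h.2 d (mem_insert_of_mem hd) c (mem_insert_self c P) (ne_of_mem_of_not_mem hd hc)
  · rintro ⟨hP, hcb, hcP⟩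
    refine ⟨fun d hd => ?_, fun d hd d' hd' hne => ?_⟩
    · rcases mem_insert.mp hd with rfl | hd
      exacts [hcb, hP.1 d hd]
    rcases mem_insert.mp hd with rfl | hdP <;> rcases mem_insert.mp hd' with rfl | hd'P
    · exact absurd rfl hne
    · exact (hcP d' hd'P).imp Ne.symm Ne.symm
    · exact hcP d hdP
    · exact hP.2 d hdP d' hd'P hne

open Classical in
noncomputable def placements (b : Fin n → ℕ) (k : ℕ) : Finset (Finset (Fin n × ℕ)) :=
  {P ∈ (univ ×ˢ range (univ.sup b)).powerset | IsRookPlacement b P ∧ #P = k}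

theorem mem_placements {k : ℕ} {P : Finset (Fin n × ℕ)} :
    P ∈ placements b k ↔ IsRookPlacement b P ∧ #P = k := by
  classical
  refine ⟨fun h => (mem_filter.mp h).2, fun h => mem_filter.mpr ⟨mem_powerset.mpr ?_, h⟩⟩
  intro c hc
  exact mem_product.mpr ⟨mem_univ _,
    mem_range.mpr ((h.1.1 c hc).trans_le (le_sup (f := b) (mem_univ c.1)))⟩

theorem rookNum_eq_card_placements (b : Fin n → ℕ) (k : ℕ) : rookNum b k = #(placements b k) := by
  rw [rookNum, ← Set.ncard_coe_finset]
  congr 1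
  ext P
  simp [mem_placements]

theorem rookNum_zero (b : Fin n → ℕ) : rookNum b 0 = 1 := by
  rw [rookNum_eq_card_placements, card_eq_one]
  refine ⟨∅, eq_singleton_iff_unique_mem.mpr ⟨mem_placements.mpr ⟨?_, rfl⟩, fun P hP => ?_⟩⟩
  · exact ⟨fun c hc => absurd hc (notMem_empty c), fun c hc => absurd hc (notMem_empty c)⟩
  · exact card_eq_zero.mp (mem_placements.mp hP).2

theorem rookNum_eq_zero_of_lt (b : Fin n → ℕ) {k : ℕ} (hk : n < k) : rookNum b k = 0 := by
  rw [rookNum_eq_card_placements, card_eq_zero, eq_empty_iff_forall_notMem]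
  intro P hPk
  obtain ⟨hP, rfl⟩ := mem_placements.mp hPk
  have := card_le_card_of_injOn Prod.fst (fun _ _ => mem_coe.mpr (mem_univ _)) hP.injOn_fst
  rw [card_univ, Fintype.card_fin] at this
  omega

theorem card_range_sdiff_image_snd {c m : ℕ} (hc : ∀ i, b i ≤ c) {Q : Finset (Fin n × ℕ)}
    (hQm : Q ∈ placements b m) : (#(range c \ Q.image Prod.snd) : ℤ) = c - m := by
  obtain ⟨hQ, rfl⟩ := mem_placements.mp hQm
  have hrows : Q.image Prod.snd ⊆ range c := fun r hr => by
    obtain ⟨d, hd, rfl⟩ := mem_image.mp hr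
    exact mem_range.mpr ((hQ.1 d hd).trans_le (hc d.1))
  have hle := card_le_card hrows
  rw [card_image_of_injOn hQ.injOn_snd, card_range] at hle
  rw [card_sdiff_of_subset hrows, card_range, card_image_of_injOn hQ.injOn_snd,
    Nat.cast_sub hle]

end Placements

section LastColumn

variable {n : ℕ}

def castSuccCell (n : ℕ) : Fin n × ℕ ↪ Fin (n + 1) × ℕ :=
  Fin.castSuccEmb.prodMap (Function.Embedding.refl ℕ)

@[simp]
theorem castSuccCell_apply (c : Fin n × ℕ) : castSuccCell n c = (c.1.castSucc, c.2) := rfl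

theorem last_notMem_map_castSuccCell (Q : Finset (Fin n × ℕ)) (r : ℕ) :
    (Fin.last n, r) ∉ Q.map (castSuccCell n) := by
  simp [Fin.castSucc_ne_last]

theorem isRookPlacement_map_castSuccCell {b : Fin (n + 1) → ℕ} {Q : Finset (Fin n × ℕ)} :
    IsRookPlacement b (Q.map (castSuccCell n)) ↔ IsRookPlacement (b ∘ Fin.castSucc) Q := by
  simp only [IsRookPlacement, forall_mem_map, castSuccCell_apply, ne_eq, Prod.ext_iff,
    Fin.castSucc_inj, Function.comp_apply]

theorem map_preimage_castSuccCell {P : Finset (Fin (n + 1) × ℕ)}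
    (h : ∀ r, (Fin.last n, r) ∉ P) :
    (P.preimage (castSuccCell n) (castSuccCell n).injective.injOn).map (castSuccCell n) = P := by
  ext ⟨i, r⟩
  simp only [mem_map, mem_preimage]
  refine ⟨fun ⟨c, hc, hci⟩ => hci ▸ hc, fun hP => ?_⟩
  obtain ⟨i', rfl⟩ := Fin.exists_castSucc_eq.mpr (fun hi => h r (hi ▸ hP))
  exact ⟨(i', r), hP, rfl⟩

open Classical in
theorem card_placements_filter_not_exists (b : Fin (n + 1) → ℕ) (k : ℕ) :
    #{P ∈ placements b k | ¬∃ r, (Fin.last n, r) ∈ P} = #(placements (b ∘ Fin.castSucc) k) := by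
  refine card_bij' (fun P _ => P.preimage (castSuccCell n) (castSuccCell n).injective.injOn)
    (fun Q _ => Q.map (castSuccCell n)) (fun P hP => ?_) (fun Q hQ => ?_)
    (fun P hP => map_preimage_castSuccCell (not_exists.mp (mem_filter.mp hP).2))
    (fun Q _ => preimage_map _ Q)
  · obtain ⟨hPk, hlast⟩ := mem_filter.mp hP
    obtain ⟨hPl, rfl⟩ := mem_placements.mp hPk
    rw [← map_preimage_castSuccCell (not_exists.mp hlast), isRookPlacement_map_castSuccCell]
      at hPl
    refine mem_placements.mpr ⟨hPl, ?_⟩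
    rw [← card_map (castSuccCell n), map_preimage_castSuccCell (not_exists.mp hlast)]
  · obtain ⟨hQl, rfl⟩ := mem_placements.mp hQ
    exact mem_filter.mpr ⟨mem_placements.mpr ⟨isRookPlacement_map_castSuccCell.mpr hQl,
      card_map _⟩, fun ⟨r, hr⟩ => last_notMem_map_castSuccCell Q r hr⟩

theorem injective_insert_last_map_castSuccCell :
    Function.Injective fun x : (_ : Finset (Fin n × ℕ)) × ℕ =>
      insert (Fin.last n, x.2) (x.1.map (castSuccCell n)) := by
  rintro ⟨Q₁, r₁⟩ ⟨Q₂, r₂⟩ (h : insert _ (Q₁.map _) = insert _ (Q₂.map _))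
  obtain rfl : r₁ = r₂ := by
    have h₁ := mem_insert_self (Fin.last n, r₁) (Q₁.map (castSuccCell n))
    rw [h] at h₁
    rcases mem_insert.mp h₁ with h' | h'
    exacts [(Prod.ext_iff.mp h').2, absurd h' (last_notMem_map_castSuccCell Q₂ r₁)]
  have hQ := congrArg (fun P => P.erase (Fin.last n, r₁)) h
  simp only [erase_insert (last_notMem_map_castSuccCell _ r₁)] at hQ
  rw [map_injective _ hQ]

open Classical in
theorem placements_filter_exists_eq_image (b : Fin (n + 1) → ℕ) (m : ℕ) :
    {P ∈ placements b (m + 1) | ∃ r, (Fin.last n, r) ∈ P} =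
      ((placements (b ∘ Fin.castSucc) m).sigma
        fun Q => range (b (Fin.last n)) \ Q.image Prod.snd).image
          fun x => insert (Fin.last n, x.2) (x.1.map (castSuccCell n)) := by
  set e := castSuccCell n
  have hlast : ∀ (Q : Finset (Fin n × ℕ)) r, (Fin.last n, r) ∉ Q.map e :=
    last_notMem_map_castSuccCell
  ext P
  simp only [mem_filter, mem_image, mem_sigma, mem_placements, mem_sdiff, mem_range]
  constructor
  · rintro ⟨⟨hP, hcard⟩, r, hr⟩
    set Q := (P.erase (Fin.last n, r)).preimage e e.injective.injOn
    have hins : insert (Fin.last n, r) (Q.map e) = P := by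
      rw [map_preimage_castSuccCell fun r' hr' =>
        (hP.2 _ (mem_of_mem_erase hr') _ hr (ne_of_mem_erase hr')).1 rfl, insert_erase hr]
    rw [← hins, isRookPlacement_insert (hlast Q r), isRookPlacement_map_castSuccCell] at hP
    rw [← hins, card_insert_of_notMem (hlast Q r), card_map] at hcard
    refine ⟨⟨Q, r⟩, ⟨⟨hP.1, Nat.add_right_cancel hcard⟩, hP.2.1, ?_⟩, hins⟩
    rintro ⟨d, hd, rfl⟩
    exact (hP.2.2 (e d) (mem_map_of_mem e hd)).2 rfl
  · rintro ⟨⟨Q, r⟩, ⟨⟨hQ, hcard⟩, hrc, hrQ⟩, rfl⟩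
    refine ⟨⟨(isRookPlacement_insert (hlast Q r)).mpr
      ⟨isRookPlacement_map_castSuccCell.mpr hQ, hrc, ?_⟩, ?_⟩, r, mem_insert_self _ _⟩
    · simp only [forall_mem_map]
      exact fun d hd => ⟨Fin.castSucc_ne_last d.1, fun h => hrQ ⟨d, hd, h⟩⟩
    · rw [card_insert_of_notMem (hlast Q r), card_map, hcard]

open Classical in
theorem card_placements_filter_exists (b : Fin (n + 1) → ℕ) (hb : Monotone b) (m : ℕ) :
    (#{P ∈ placements b (m + 1) | ∃ r, (Fin.last n, r) ∈ P} : ℤ) =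
      (b (Fin.last n) - m) * #(placements (b ∘ Fin.castSucc) m) := by
  rw [placements_filter_exists_eq_image, card_image_of_injective _
    injective_insert_last_map_castSuccCell, card_sigma, Nat.cast_sum,
    sum_congr rfl fun Q hQ => card_range_sdiff_image_snd (b := b ∘ Fin.castSucc)
      (fun i => hb (Fin.le_last _)) hQ,
    sum_const, nsmul_eq_mul, mul_comm]

theorem rookNum_succ_eq (b : Fin (n + 1) → ℕ) (hb : Monotone b) (m : ℕ) :
    (rookNum b (m + 1) : ℤ) = rookNum (b ∘ Fin.castSucc) (m + 1) +
      (b (Fin.last n) - m) * rookNum (b ∘ Fin.castSucc) m := by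
  classical
  simp only [rookNum_eq_card_placements]
  rw [← card_filter_add_card_filter_not (s := placements b (m + 1))
    (fun P => ∃ r, (Fin.last n, r) ∈ P), Nat.cast_add, card_placements_filter_exists b hb,
    card_placements_filter_not_exists]
  ring

end LastColumn

theorem sum_rookNum_mul_descPochhammer_eval {n : ℕ} (b : Fin n → ℕ) (hb : Monotone b) (x : ℤ) :
    ∑ k ∈ range (n + 1), (rookNum b k : ℤ) * (descPochhammer ℤ (n - k)).eval x =
      ∏ i, (x - rootVec b i) := by
  induction n with
  | zero => simp [rookNum_zero]
  | succ n ih =>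
    set b' := b ∘ Fin.castSucc
    set c : ℤ := (b (Fin.last n) : ℤ)
    let P : ℕ → ℤ := fun t => (descPochhammer ℤ t).eval x
    have hstep : ∀ k ∈ range (n + 1), (rookNum b' k : ℤ) * P (n - k) * (x - rootVec b (Fin.last n))
        = rookNum b' k * P (n + 1 - k) + (c - k) * rookNum b' k * P (n - k) := by
      intro k hk
      have hk : k ≤ n := Nat.lt_succ_iff.mp (mem_range.mp hk)
      simp only [P, rootVec, Fin.val_last]
      rw [show n + 1 - k = n - k + 1 by omega, descPochhammer_succ_eval, Nat.cast_sub hk]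
      ring
    have hL : ∑ k ∈ range (n + 2), (rookNum b k : ℤ) * P (n + 1 - k) =
        ∑ m ∈ range (n + 1), (rookNum b' (m + 1) : ℤ) * P (n - m) +
          ∑ m ∈ range (n + 1), (c - m) * rookNum b' m * P (n - m) + P (n + 1) := by
      rw [sum_range_succ', ← sum_add_distrib, rookNum_zero, Nat.cast_one, one_mul]
      simp only [rookNum_succ_eq b hb, Nat.add_sub_add_right]
      push_cast
      congr 1
      exact sum_congr rfl fun m _ => by ring
    have hR : ∑ k ∈ range (n + 1), (rookNum b' k : ℤ) * P (n + 1 - k) =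
        ∑ m ∈ range (n + 1), (rookNum b' (m + 1) : ℤ) * P (n - m) + P (n + 1) := by
      rw [sum_range_succ', sum_range_succ (fun m => (rookNum b' (m + 1) : ℤ) * P (n - m)),
        rookNum_zero, rookNum_eq_zero_of_lt b' (Nat.lt_succ_self n)]
      simp
    rw [Fin.prod_univ_castSucc]
    change _ = (∏ i, (x - rootVec b' i)) * _
    rw [← ih b' (hb.comp Fin.strictMono_castSucc.monotone), sum_mul,
      sum_congr rfl hstep, sum_add_distrib, hR]
    exact hL.trans (add_right_comm _ _ _)

theorem eq_zero_of_forall_sum_mul_descFactorial_eq_zero {N : ℕ} {e : ℕ → ℤ}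
    (h : ∀ m : ℕ, ∑ t ∈ range N, e t * m.descFactorial t = 0) : ∀ t < N, e t = 0 := by
  intro t
  induction t using Nat.strong_induction_on with
  | _ t ih =>
    intro ht
    have h₀ := h t
    rw [sum_eq_single_of_mem t (mem_range.mpr ht), Nat.descFactorial_self] at h₀
    · exact (mul_eq_zero.mp h₀).resolve_right (Nat.cast_ne_zero.mpr t.factorial_ne_zero)
    intro s hs hst
    rcases lt_or_gt_of_ne hst with hlt | hgt
    · rw [ih s hlt (mem_range.mp hs), zero_mul]
    · rw [Nat.descFactorial_eq_zero_iff_lt.mpr hgt, Nat.cast_zero, mul_zero]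

theorem rookEquiv_of_rootVec_eq_comp {n : ℕ} {b₁ b₂ : Fin n → ℕ} (h₁ : Monotone b₁)
    (h₂ : Monotone b₂) (σ : Equiv.Perm (Fin n)) (h : rootVec b₁ = rootVec b₂ ∘ σ) :
    RookEquiv b₁ b₂ := by
  intro k
  rcases le_or_gt k n with hk | hk
  swap
  · rw [rookNum_eq_zero_of_lt b₁ hk, rookNum_eq_zero_of_lt b₂ hk]
  have hreflect : ∀ (b : Fin n → ℕ) (m : ℕ),
      ∑ k ∈ range (n + 1), (rookNum b k : ℤ) * (descPochhammer ℤ (n - k)).eval (m : ℤ) =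
        ∑ t ∈ range (n + 1), (rookNum b (n - t) : ℤ) * m.descFactorial t := by
    intro b m
    rw [← sum_range_reflect]
    refine sum_congr rfl fun t ht => ?_
    rw [Nat.add_sub_cancel, Nat.sub_sub_self (Nat.lt_succ_iff.mp (mem_range.mp ht)),
      descPochhammer_eval_eq_descFactorial]
  have hprod : ∀ x : ℤ, ∏ i, (x - rootVec b₁ i) = ∏ i, (x - rootVec b₂ i) := fun x => by
    rw [h]
    exact Equiv.prod_comp σ (fun i => x - rootVec b₂ i)
  have hdiff := eq_zero_of_forall_sum_mul_descFactorial_eq_zero (N := n + 1)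
    (e := fun t => (rookNum b₁ (n - t) : ℤ) - rookNum b₂ (n - t)) fun m => by
      simp only [sub_mul, sum_sub_distrib]
      rw [← hreflect, ← hreflect, sum_rookNum_mul_descPochhammer_eval _ h₁,
        sum_rookNum_mul_descPochhammer_eval _ h₂, hprod, sub_self]
  have := hdiff (n - k) (by omega)
  rw [Nat.sub_sub_self hk, sub_eq_zero] at this
  exact_mod_cast this

theorem Monotone.update {ι α : Type*} [LinearOrder ι] [Preorder α] {f : ι → α}
    (hf : Monotone f) {p : ι} {x : α} (hl : ∀ l < p, f l ≤ x) (hr : ∀ l, p < l → x ≤ f l) :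
    Monotone (Function.update f p x) := by
  intro i k hik
  rcases hik.eq_or_lt with rfl | hik
  · exact le_rfl
  by_cases hi : i = p <;> by_cases hk : k = p
  · exact absurd (hi.trans hk.symm) hik.ne
  · rw [hi, Function.update_self, Function.update_of_ne hk]
    exact hr k (hi ▸ hik)
  · rw [hk, Function.update_self, Function.update_of_ne hi]
    exact hl i (hk ▸ hik)
  · rw [Function.update_of_ne hi, Function.update_of_ne hk]
    exact hf hik.le

theorem sum_mul_lt_sum_mul_of_move {ι : Type*} [Fintype ι] [DecidableEq ι] {w b b' : ι → ℕ}
    {p q : ι} {d : ℕ} (hd : 0 < d) (hw : w q < w p) (hp : b' p + d = b p) (hq : b' q = b q + d)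
    (hother : ∀ l, l ≠ p → l ≠ q → b' l = b l) :
    ∑ i, w i * b' i < ∑ i, w i * b i := by
  have hpq : p ≠ q := fun h => hw.ne (h ▸ rfl)
  have key : ∀ i, w i * b' i + (if i = p then w p * d else 0) =
      w i * b i + (if i = q then w q * d else 0) := by
    intro i
    by_cases hip : i = p
    · subst hip
      rw [if_pos rfl, if_neg hpq, ← hp]
      ring
    by_cases hiq : i = q
    · subst hiq
      rw [if_neg hip, if_pos rfl, hq]
      ring
    rw [if_neg hip, if_neg hiq, hother i hip hiq]
  have hsum := congrArg (fun f => ∑ i, f i) (funext key)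
  simp only [sum_add_distrib, sum_ite_eq', mem_univ, if_true] at hsum
  have := Nat.mul_lt_mul_of_pos_right hw hd
  omega

/-- After the exchange, columns `p` and `q` have heights `p - ξ q` and `q - ξ p`. -/
theorem exists_movesSquares_rootVec_eq_comp_swap {n : ℕ} {b : Fin n → ℕ} (hb : Monotone b)
    {p q : Fin n} (hpq : p < q) (hlt : rootVec b p < rootVec b q) (hqp : rootVec b q ≤ p)
    (hleft : ∀ l < p, (b l : ℤ) ≤ p - rootVec b q)
    (hright : ∀ l, q < l → (q : ℤ) - rootVec b p ≤ b l) :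
    ∃ b' : Fin n → ℕ, Monotone b' ∧ MovesSquares b' b ∧
      rootVec b' = rootVec b ∘ Equiv.swap p q ∧
      ∑ i : Fin n, (n - i) * b' i < ∑ i : Fin n, (n - i) * b i := by
  simp only [rootVec] at hlt hqp hleft hright
  set d := (rootVec b q - rootVec b p).toNat with hd
  simp only [rootVec] at hd
  have hdp : d ≤ b p := by omega
  set b' := Function.update (Function.update b p (b p - d)) q (b q + d)
  have hb'p : b' p = b p - d := by simp [b', hpq.ne]
  have hb'q : b' q = b q + d := by simp [b']
  have hother : ∀ l, l ≠ p → l ≠ q → b' l = b l := fun l hlp hlq => by simp [b', hlp, hlq]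
  have hmono : Monotone b' := by
    have hp : Monotone (Function.update b p (b p - d)) :=
      hb.update (fun l hl => by have := hleft l hl; omega)
        fun l hl => (Nat.sub_le _ _).trans (hb hl.le)
    refine hp.update (fun l hl => ?_) fun l hl => ?_
    · rcases eq_or_ne l p with rfl | hlp
      · simp only [Function.update_self]
        exact (Nat.sub_le _ _).trans ((hb hpq.le).trans (Nat.le_add_right _ _))
      · rw [Function.update_of_ne hlp]
        exact (hb hl.le).trans (Nat.le_add_right _ _)
    · rw [Function.update_of_ne (hpq.trans hl).ne']
      have := hright l hl
      omega
  refine ⟨b', hmono,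
    ⟨q, p, d, hpq.ne', by omega, hb'q, by omega, fun l hlq hlp => hother l hlp hlq⟩,
    ?_, sum_mul_lt_sum_mul_of_move (by omega) (by omega) (by omega) hb'q hother⟩
  funext l
  simp only [rootVec, Function.comp_apply]
  rcases eq_or_ne l p with rfl | hlp
  · rw [Equiv.swap_apply_left, hb'p]
    omega
  rcases eq_or_ne l q with rfl | hlq
  · rw [Equiv.swap_apply_right, hb'q]
    omega
  rw [Equiv.swap_apply_of_ne_of_ne hlp hlq, hother l hlp hlq]

theorem MovesSquares.ne {n : ℕ} {b₁ b₂ : Fin n → ℕ} (h : MovesSquares b₁ b₂) : b₁ ≠ b₂ := by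
  obtain ⟨i, _, k, -, hk, hi, -⟩ := h
  intro heq
  rw [heq] at hi
  omega

theorem rookEquivGraph_adj_of_movesSquares {n : ℕ} {B : FerrersBoard n}
    {C D : {C : FerrersBoard n // RookEquiv C.1 B.1}} (h : MovesSquares D.1.1 C.1.1) :
    (rookEquivGraph B).Adj C D :=
  ⟨fun hCD => h.ne (congrArg (fun E => E.1.1) hCD.symm), Or.inr h⟩

/-- Exchange `ξ p` and `ξ q`, where `p` is the leftmost position after `j` with a larger entry
to its right and `q` is the rightmost such larger entry: this choice keeps the board Ferrers. -/
theorem exists_movesSquares_of_unsorted {n : ℕ} {b : Fin n → ℕ} (hb : Monotone b) {M : ℤ}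
    {j : Fin n} (hmax : ∀ i, rootVec b i ≤ M) (hj : rootVec b j = M)
    (hunsorted : ∃ p q, j < p ∧ p < q ∧ rootVec b p < rootVec b q) :
    ∃ b' : Fin n → ℕ, Monotone b' ∧ MovesSquares b' b ∧
      (∃ p q : Fin n, j < p ∧ j < q ∧ rootVec b' = rootVec b ∘ Equiv.swap p q) ∧
      ∑ i : Fin n, (n - i) * b' i < ∑ i : Fin n, (n - i) * b i := by
  obtain ⟨p, ⟨hjp, q₀, hpq₀, hlt₀⟩, hpmin⟩ := wellFounded_lt.has_min
    {p | j < p ∧ ∃ q, p < q ∧ rootVec b p < rootVec b q}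
    (by obtain ⟨p, q, h⟩ := hunsorted; exact ⟨p, h.1, q, h.2⟩)
  obtain ⟨q, ⟨hpq, hlt⟩, hqmax⟩ := wellFounded_gt.has_min
    {q | p < q ∧ rootVec b p < rootVec b q} ⟨q₀, hpq₀, hlt₀⟩
  have hjp' : (j : ℤ) < p := by exact_mod_cast hjp
  have hqM := hmax q
  simp only [rootVec] at hj hqM
  have hleft : ∀ l < p, (b l : ℤ) ≤ p - rootVec b q := by
    intro l hl
    rcases le_or_gt l j with hlj | hjl
    · have hbl : b l ≤ b j := hb hlj
      simp only [rootVec]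
      omega
    · have hql : rootVec b q ≤ rootVec b l := by
        by_contra! h
        exact hpmin l ⟨hjl, q, hl.trans hpq, h⟩ hl
      simp only [rootVec] at hql ⊢
      omega
  have hright : ∀ l, q < l → (q : ℤ) - rootVec b p ≤ b l := by
    intro l hl
    have hlp : rootVec b l ≤ rootVec b p := by
      by_contra! h
      exact hqmax l ⟨hpq.trans hl, h⟩ hl
    simp only [rootVec] at hlp ⊢
    omega
  obtain ⟨b', hb', hmove, hswap, hsum⟩ :=
    exists_movesSquares_rootVec_eq_comp_swap hb hpq hlt (by simp only [rootVec]; omega)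
      hleft hright
  exact ⟨b', hb', hmove, ⟨p, q, hjp, hjp.trans hpq, hswap⟩, hsum⟩

theorem exists_reachable_rootVec_antitone {n : ℕ} {B : FerrersBoard n} {M : ℤ} {j : Fin n}
    (C : {C : FerrersBoard n // RookEquiv C.1 B.1}) (hmax : ∀ i, rootVec C.1.1 i ≤ M)
    (hj : rootVec C.1.1 j = M) :
    ∃ B' : {C : FerrersBoard n // RookEquiv C.1 B.1},
      (rookEquivGraph B).Reachable C B' ∧
      (∀ i ≤ j, rootVec B'.1.1 i = rootVec C.1.1 i) ∧
      (∀ i₁ i₂ : Fin n, j ≤ i₁ → i₁ ≤ i₂ → rootVec B'.1.1 i₂ ≤ rootVec B'.1.1 i₁) := by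
  induction hN : ∑ i : Fin n, (n - i) * C.1.1 i using Nat.strong_induction_on generalizing C
    with | _ N ih =>
  by_cases hsorted : ∀ p q, j < p → p < q → rootVec C.1.1 q ≤ rootVec C.1.1 p
  · refine ⟨C, .refl C, fun _ _ => rfl, fun i₁ i₂ h₁ h₂ => ?_⟩
    rcases h₁.eq_or_lt with rfl | h₁
    · exact hj ▸ hmax i₂
    rcases h₂.eq_or_lt with rfl | h₂
    · exact le_rfl
    exact hsorted i₁ i₂ h₁ h₂
  push Not at hsorted
  obtain ⟨b', hb', hmove, ⟨p, q, hjp, hjq, hswap⟩, hsum⟩ :=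
    exists_movesSquares_of_unsorted C.1.2 hmax hj hsorted
  let C' : {C : FerrersBoard n // RookEquiv C.1 B.1} :=
    ⟨⟨b', hb'⟩, fun k => (rookEquiv_of_rootVec_eq_comp hb' C.1.2 _ hswap k).trans (C.2 k)⟩
  have hfix : ∀ i ≤ j, rootVec C'.1.1 i = rootVec C.1.1 i := fun i hi => by
    simp only [C', hswap, Function.comp_apply,
      Equiv.swap_apply_of_ne_of_ne (hi.trans_lt hjp).ne (hi.trans_lt hjq).ne]
  obtain ⟨B', hreach, hprefix, hanti⟩ := ih _ (hN ▸ hsum) C'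
    (fun i => by simp only [C', hswap, Function.comp_apply]; exact hmax _)
    ((hfix j le_rfl).trans hj) rfl
  exact ⟨B', (rookEquivGraph_adj_of_movesSquares hmove).reachable.trans hreach,
    fun i hi => (hprefix i hi).trans (hfix i hi), hanti⟩

theorem stmt2_general {n : ℕ} (B : FerrersBoard n) (M : ℤ) (j : Fin n)
    (hmax : ∀ i, rootVec B.1 i ≤ M)
    (hj : rootVec B.1 j = M) :
    ∃ B' : {C : FerrersBoard n // RookEquiv C.1 B.1},
      (rookEquivGraph B).Reachable ⟨B, fun _ => rfl⟩ B' ∧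
      (∀ i ≤ j, rootVec B'.1.1 i = rootVec B.1 i) ∧
      (∀ i₁ i₂ : Fin n, j ≤ i₁ → i₁ ≤ i₂ → rootVec B'.1.1 i₂ ≤ rootVec B'.1.1 i₁) :=
  exists_reachable_rootVec_antitone ⟨B, fun _ => rfl⟩ hmax hj

/-- every Ferrers board is connected by a path in its rook
equivalence graph to a board whose root vector agrees with the original in the
first `j` positions (where position `j`, 0-indexed, holds the leftmost maximum
entry `M`) and is weakly decreasing from position `j` on. -/
theorem stmt2 {n : ℕ} (B : FerrersBoard n) (M : ℤ) (j : Fin n)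
    (hmax : ∀ i, rootVec B.1 i ≤ M)
    (hj : rootVec B.1 j = M)
    (hfirst : ∀ i < j, rootVec B.1 i ≠ M) :
    ∃ B' : {C : FerrersBoard n // RookEquiv C.1 B.1},
      (rookEquivGraph B).Reachable ⟨B, fun _ => rfl⟩ B' ∧
      (∀ i ≤ j, rootVec B'.1.1 i = rootVec B.1 i) ∧
      (∀ i₁ i₂ : Fin n, j ≤ i₁ → i₁ ≤ i₂ → rootVec B'.1.1 i₂ ≤ rootVec B'.1.1 i₁) :=
  stmt2_general B M j hmax hj
end

section
/- Fix a positive integer m. Let B_1 and B_2 be m-level rook equivalent singleton boards, both with n columns, that are adjacent in the m-level rook equivalence graph (i.e., {B_1,B_2} is an edge). Then the m-level root vectors ξ_m(B_1) and ξ_m(B_2) agree in all positions except two positions i_1 < i_2, in which the two (distinct) entries are swapped: if ξ_m(B_1) = ⟨z_1,…,z_{i_1},…,z_{i_2},…,z_n⟩ then ξ_m(B_2) = ⟨z_1,…,z_{i_2},…,z_{i_1},…,z_n⟩ with z_{i_1} ≠ z_{i_2}. -/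
/-- An `m`-level rook placement on the board with column heights `b`:
a set of cells (column, row) inside the board, no two sharing a column or a level.
Cells are 0-indexed: cell `(i, j)` lies in the board iff `j < b i`, and the level
of row `j` is `j / m`. -/
def IsMLevelPlacement {n : ℕ} (m : ℕ) (b : Fin n → ℕ) (P : Finset (Fin n × ℕ)) : Prop :=
  (∀ c ∈ P, c.2 < b c.1) ∧
  ∀ c ∈ P, ∀ d ∈ P, c ≠ d → c.1 ≠ d.1 ∧ c.2 / m ≠ d.2 / m

/-- The `k`-th `m`-level rook number of the board `b`. -/
noncomputable def mRookNum {n : ℕ} (m : ℕ) (b : Fin n → ℕ) (k : ℕ) : ℕ :=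
  Set.ncard {P : Finset (Fin n × ℕ) | IsMLevelPlacement m b P ∧ P.card = k}

/-- Two boards are `m`-level rook equivalent if all their `m`-level rook numbers agree. -/
def MRookEquiv {n₁ n₂ : ℕ} (m : ℕ) (b₁ : Fin n₁ → ℕ) (b₂ : Fin n₂ → ℕ) : Prop :=
  ∀ k, mRookNum m b₁ k = mRookNum m b₂ k

/-- The `m`-floor of a natural number: the largest multiple of `m` that is `≤ o`. -/
def mFloor (m o : ℕ) : ℕ := m * (o / m)

/-- The `m`-floor of an integer: the largest multiple of `m` that is `≤ o`. -/
def mFloorZ (m : ℕ) (o : ℤ) : ℤ := o - o % (m : ℤ)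

/-- A singleton board: a Ferrers board (weakly increasing column heights) such that
whenever a column height `b i` is not a multiple of `m`, the `m`-floor of the next
column height is strictly larger. -/
def IsSingletonBoard {n : ℕ} (m : ℕ) (b : Fin n → ℕ) : Prop :=
  Monotone b ∧ ∀ i j : Fin n, (j : ℕ) = (i : ℕ) + 1 → ¬ (m ∣ b i) →
    mFloor m (b i) < mFloor m (b j)

/-- The `m`-level root vector of a board: the (0-indexed) `i`-th entry is
`m * i - b i` (1-indexed: `m(i-1) - b_i`). -/
def mRootVec {n : ℕ} (m : ℕ) (b : Fin n → ℕ) : Fin n → ℤ :=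
  fun i => (m : ℤ) * (i : ℤ) - (b i : ℤ)

/-- A singleton board with `n` columns (for the fixed level size `m`). -/
def SingletonBoard (m n : ℕ) : Type := {b : Fin n → ℕ // IsSingletonBoard m b}

/-- The `m`-level rook equivalence graph of the equivalence class of `B`: vertices
are the singleton boards with `n` columns `m`-level rook equivalent to `B`; two
distinct boards are adjacent when one is obtained from the other by moving squares
out of one column into a single other column. -/
def mRookEquivGraph {n : ℕ} (m : ℕ) (B : SingletonBoard m n) :
    SimpleGraph {C : SingletonBoard m n // MRookEquiv m C.1 B.1} :=
  SimpleGraph.fromRel fun C D => MovesSquares C.1.1 D.1.1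

/-- `mEntryCount m b k` is `v_k`, the number of entries of the `m`-level root
vector of `b` equal to `k`. -/
def mEntryCount {n : ℕ} (m : ℕ) (b : Fin n → ℕ) (k : ℕ) : ℕ :=
  (Finset.univ.filter fun l => mRootVec m b l = (k : ℤ)).card

/-! If `b₂` arises from `b₁` by moving squares between columns `p` and `q`, the root vectors
differ only at `p` and `q` and have the same sum. On a singleton board every column contains
the whole level of each cell of an earlier column, so `r₂ = ∑_{i<j} b_i (b_j - m)`; expanding
the square shows that `2 r₂ + ∑ ξ_i²` depends only on the number of cells. So rook equivalence
also equates the sums of squares of the root vectors, and two pairs with equal sums and equal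
sums of squares agree as multisets: the two changed entries are swapped. -/

section

open Finset

theorem sq_sum_eq_sum_sq_add_two_mul_sum_Ioi {ι R : Type*} [CommSemiring R] [LinearOrder ι]
    [Fintype ι] [LocallyFiniteOrderTop ι] (f : ι → R) :
    (∑ i, f i) ^ 2 = ∑ i, f i ^ 2 + 2 * ∑ i, ∑ j ∈ Ioi i, f i * f j := by
  have hsplit : ∀ i j, f i * f j = (if i < j then f i * f j else 0) +
      (if j < i then f j * f i else 0) + (if i = j then f i * f j else 0) := by
    intro i j
    rcases lt_trichotomy i j with h | rfl | h
    · simp [h, h.not_gt, h.ne]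
    · simp
    · simp [h, h.not_gt, h.ne', mul_comm]
  calc (∑ i, f i) ^ 2 = ∑ i, ∑ j, f i * f j := by rw [sq, sum_mul_sum]
    _ = ∑ i, ∑ j, (if i < j then f i * f j else 0) +
        ∑ i, ∑ j, (if j < i then f j * f i else 0) +
        ∑ i, ∑ j, (if i = j then f i * f j else 0) := by
      simp only [← sum_add_distrib]
      exact sum_congr rfl fun i _ => sum_congr rfl fun j _ => hsplit i j
    _ = _ := by
      rw [sum_comm (f := fun i j => if j < i then f j * f i else 0)]
      simp only [sum_ite_eq, mem_univ, if_true]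
      simp only [← sum_filter, filter_lt_eq_Ioi, sq]
      ring

theorem eq_swap_of_sum_eq_of_sum_sq_eq {ι R : Type*} [Fintype ι] [CommRing R] [IsDomain R]
    [CharZero R] {u v : ι → R} {p q : ι} (hpq : p ≠ q) (hne : u p ≠ v p)
    (hrest : ∀ l, l ≠ p → l ≠ q → u l = v l) (hsum : ∑ i, u i = ∑ i, v i)
    (hsq : ∑ i, u i ^ 2 = ∑ i, v i ^ 2) :
    v p = u q ∧ v q = u p := by
  have hpair : ∀ g : R → R,
      ∑ i, (g (u i) - g (v i)) = g (u p) - g (v p) + (g (u q) - g (v q)) :=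
    fun g => Fintype.sum_eq_add p q hpq fun l ⟨hlp, hlq⟩ => by rw [hrest l hlp hlq, sub_self]
  have h₁ : u p - v p + (u q - v q) = 0 := by
    rw [← sub_eq_zero.2 hsum, ← sum_sub_distrib]; exact (hpair id).symm
  have h₂ : u p ^ 2 - v p ^ 2 + (u q ^ 2 - v q ^ 2) = 0 := by
    rw [← sub_eq_zero.2 hsq, ← sum_sub_distrib]; exact (hpair (· ^ 2)).symm
  have hmid : u p + v p = u q + v q := by
    have : (u p - v p) * (u p + v p - (u q + v q)) = 0 := by
      linear_combination h₂ - (u q + v q) * h₁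
    exact sub_eq_zero.1 ((mul_eq_zero.1 this).resolve_left (sub_ne_zero.2 hne))
  constructor
  · exact mul_left_cancel₀ (two_ne_zero (α := R)) (by linear_combination hmid - h₁)
  · exact mul_left_cancel₀ (two_ne_zero (α := R)) (by linear_combination -hmid - h₁)

variable {m n : ℕ}

theorem MovesSquares.symm {b₁ b₂ : Fin n → ℕ} (h : MovesSquares b₁ b₂) :
    MovesSquares b₂ b₁ :=
  let ⟨i, j, k, hij, hk, hi, hj, hrest⟩ := h
  ⟨j, i, k, hij.symm, hk, hj, hi, fun l hlj hli => (hrest l hli hlj).symm⟩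

theorem MovesSquares.sum_eq {b₁ b₂ : Fin n → ℕ} (h : MovesSquares b₁ b₂) :
    ∑ i, (b₁ i : ℤ) = ∑ i, (b₂ i : ℤ) := by
  obtain ⟨i, j, k, hij, -, hi, hj, hrest⟩ := h
  rw [← sub_eq_zero, ← sum_sub_distrib,
    Fintype.sum_eq_add i j hij fun l ⟨hli, hlj⟩ => by rw [hrest l hli hlj, sub_self]]
  omega

/-- `m * (a / m) + m` is the top of the level of row `a`. -/
theorem IsSingletonBoard.mul_div_add_le_of_lt {b : Fin n → ℕ} (hb : IsSingletonBoard m b)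
    {i j : Fin n} (hij : i < j) {a : ℕ} (ha : a < b i) : m * (a / m) + m ≤ b j := by
  obtain ⟨c, hcj, hc⟩ : ∃ c ≤ j, a / m < b c / m := by
    by_cases hdvd : m ∣ b i
    · exact ⟨i, hij.le, Nat.div_lt_div_of_lt_of_dvd hdvd ha⟩
    · have hi : (i : ℕ) + 1 < n := by omega
      have hfloor := hb.2 i ⟨i + 1, hi⟩ rfl hdvd
      exact ⟨⟨i + 1, hi⟩, Fin.mk_le_of_le_val hij,
        (Nat.div_le_div_right ha.le).trans_lt (Nat.lt_of_mul_lt_mul_left hfloor)⟩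
  calc m * (a / m) + m = m * (a / m + 1) := by ring
    _ ≤ m * (b c / m) := Nat.mul_le_mul_left m hc
    _ ≤ b c := Nat.mul_div_le _ _
    _ ≤ b j := hb.1 hcj

theorem card_filter_div_ne (hm : 0 < m) {a B : ℕ} (h : m * (a / m) + m ≤ B) :
    (((range B).filter fun r => r / m ≠ a / m).card : ℤ) = B - m := by
  have hlevel :
      (range B).filter (fun r => r / m = a / m) = Ico (m * (a / m)) (m * (a / m) + m) := by
    ext r
    simp only [mem_filter, mem_range, mem_Ico, Nat.div_eq_iff hm, mul_comm (a / m) m]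
    omega
  have hsplit := card_filter_add_card_filter_not (s := range B) fun r => r / m = a / m
  rw [hlevel, Nat.card_Ico, card_range] at hsplit
  simp only [ne_eq]
  omega

def boardCells (b : Fin n → ℕ) : Finset (Fin n × ℕ) :=
  univ.biUnion fun i => (range (b i)).image fun j => (i, j)

theorem mem_boardCells {b : Fin n → ℕ} {c : Fin n × ℕ} :
    c ∈ boardCells b ↔ c.2 < b c.1 := by
  obtain ⟨i, j⟩ := c
  simp [boardCells, Prod.ext_iff]

def rookPairs (m : ℕ) (b : Fin n → ℕ) : Finset ((Fin n × ℕ) × (Fin n × ℕ)) :=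
  (boardCells b ×ˢ boardCells b).filter fun cd => cd.1.1 < cd.2.1 ∧ cd.1.2 / m ≠ cd.2.2 / m

theorem isMLevelPlacement_pair {b : Fin n → ℕ} {c d : Fin n × ℕ} (hcd : c.1 < d.1) :
    IsMLevelPlacement m b {c, d} ↔ c.2 < b c.1 ∧ d.2 < b d.1 ∧ c.2 / m ≠ d.2 / m := by
  have hne : c ≠ d := fun h => hcd.ne (congrArg Prod.fst h)
  simp only [IsMLevelPlacement, mem_insert, mem_singleton, forall_eq_or_imp, forall_eq,
    ne_eq, not_true_eq_false, IsEmpty.forall_iff, true_and, and_true]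
  exact ⟨fun h => ⟨h.1.1, h.1.2, (h.2.1 hne).2⟩,
    fun h => ⟨⟨h.1, h.2.1⟩, fun _ => ⟨hcd.ne, h.2.2⟩,
      fun _ => ⟨hcd.ne', Ne.symm h.2.2⟩⟩⟩

theorem mRookNum_two_eq_card_rookPairs (b : Fin n → ℕ) :
    mRookNum m b 2 = (rookPairs m b).card := by
  have himage : {P | IsMLevelPlacement m b P ∧ P.card = 2} =
      (fun cd : (Fin n × ℕ) × (Fin n × ℕ) => ({cd.1, cd.2} : Finset (Fin n × ℕ))) ''
        (rookPairs m b : Set _) := by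
    ext P
    simp only [Set.mem_ofPred_eq, Set.mem_image, mem_coe, rookPairs, mem_filter, mem_product,
      mem_boardCells]
    constructor
    · rintro ⟨hP, hcard⟩
      obtain ⟨c, d, hcd, rfl⟩ := card_eq_two.1 hcard
      have hcol : c.1 ≠ d.1 := (hP.2 c (by simp) d (by simp) hcd).1
      rcases hcol.lt_or_gt with hlt | hlt
      · exact ⟨(c, d), ⟨(isMLevelPlacement_pair hlt).1 hP |>.imp_right And.left, hlt,
          ((isMLevelPlacement_pair hlt).1 hP).2.2⟩, rfl⟩
      · rw [pair_comm] at hP ⊢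
        exact ⟨(d, c), ⟨(isMLevelPlacement_pair hlt).1 hP |>.imp_right And.left, hlt,
          ((isMLevelPlacement_pair hlt).1 hP).2.2⟩, rfl⟩
    · rintro ⟨⟨c, d⟩, ⟨⟨hc, hd⟩, hlt, hlevel⟩, rfl⟩
      exact ⟨(isMLevelPlacement_pair hlt).2 ⟨hc, hd, hlevel⟩,
        card_pair fun h => hlt.ne (congrArg Prod.fst h)⟩
  rw [mRookNum, himage, Set.InjOn.ncard_image, Set.ncard_coe_finset]
  rintro ⟨c, d⟩ hcd ⟨c', d'⟩ hcd' heq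
  simp only [mem_coe, rookPairs, mem_filter] at hcd hcd'
  have := congrArg (fun s : Finset (Fin n × ℕ) => (s : Set (Fin n × ℕ))) heq
  simp only [coe_pair, Set.pair_eq_pair_iff] at this
  rcases this with ⟨rfl, rfl⟩ | ⟨rfl, rfl⟩
  · rfl
  · exact absurd hcd.2.1 hcd'.2.1.asymm

theorem IsSingletonBoard.card_rookPairs (hm : 0 < m) {b : Fin n → ℕ}
    (hb : IsSingletonBoard m b) :
    ((rookPairs m b).card : ℤ) = ∑ i, ∑ j ∈ Ioi i, (b i : ℤ) * (b j - m) := by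
  have hcells : ∀ c, c ∈ boardCells b ↔ c.1 ∈ univ ∧ c.2 ∈ range (b c.1) := by
    simp [mem_boardCells]
  have hrow : ∀ i, ∀ a < b i, ∑ j, ∑ r ∈ range (b j),
      (if i < j ∧ a / m ≠ r / m then 1 else 0 : ℤ) = ∑ j ∈ Ioi i, ((b j : ℤ) - m) := by
    intro i a ha
    calc ∑ j, ∑ r ∈ range (b j), (if i < j ∧ a / m ≠ r / m then 1 else 0 : ℤ)
        = ∑ j, if i < j then (((range (b j)).filter fun r => r / m ≠ a / m).card : ℤ)
            else 0 := by
          refine sum_congr rfl fun j _ => ?_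
          split_ifs with hij
          · rw [← sum_boole]; simp [hij, ne_comm]
          · simp [hij]
      _ = ∑ j ∈ Ioi i, ((b j : ℤ) - m) := by
          rw [← sum_filter, filter_lt_eq_Ioi]
          exact sum_congr rfl fun j hj =>
            card_filter_div_ne hm (hb.mul_div_add_le_of_lt (mem_Ioi.1 hj) ha)
  calc ((rookPairs m b).card : ℤ)
      = ∑ c ∈ boardCells b, ∑ d ∈ boardCells b,
          (if c.1 < d.1 ∧ c.2 / m ≠ d.2 / m then 1 else 0 : ℤ) := by
        rw [rookPairs, card_filter, sum_product]; push_cast; rfl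
    _ = ∑ i, ∑ a ∈ range (b i), ∑ j, ∑ r ∈ range (b j),
          (if i < j ∧ a / m ≠ r / m then 1 else 0 : ℤ) := by
        simp_rw [sum_finset_product (boardCells b) univ (fun i => range (b i)) hcells]
    _ = ∑ i, ∑ _a ∈ range (b i), ∑ j ∈ Ioi i, ((b j : ℤ) - m) :=
        sum_congr rfl fun i _ => sum_congr rfl fun a ha => hrow i a (mem_range.1 ha)
    _ = _ := by simp only [sum_const, card_range, nsmul_eq_mul, mul_sum]

theorem IsSingletonBoard.mRookNum_two (hm : 0 < m) {b : Fin n → ℕ}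
    (hb : IsSingletonBoard m b) :
    (mRookNum m b 2 : ℤ) = ∑ i, ∑ j ∈ Ioi i, (b i : ℤ) * (b j - m) := by
  rw [mRookNum_two_eq_card_rookPairs, hb.card_rookPairs hm]

theorem two_mul_sum_Ioi_add_sum_mRootVec_sq (b : Fin n → ℕ) :
    2 * ∑ i, ∑ j ∈ Ioi i, (b i : ℤ) * (b j - m) + ∑ i, mRootVec m b i ^ 2 =
      (∑ i, (b i : ℤ)) ^ 2 - 2 * m * (n - 1) * ∑ i, (b i : ℤ) +
        ∑ i : Fin n, ((m : ℤ) * i) ^ 2 := by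
  have hcard : ∀ i : Fin n, ((Ioi i).card : ℤ) = n - 1 - i := by
    intro i; rw [Fin.card_Ioi]; omega
  have hlinear : ∑ i, ∑ j ∈ Ioi i, (b i : ℤ) * (b j - m) =
      ∑ i, ∑ j ∈ Ioi i, (b i : ℤ) * b j - ∑ i, m * (n - 1 - i) * (b i : ℤ) := by
    rw [← sum_sub_distrib]
    refine sum_congr rfl fun i _ => ?_
    rw [← mul_sum, ← mul_sum, sum_sub_distrib, sum_const, nsmul_eq_mul, hcard]
    ring
  have hpointwise : ∀ i : Fin n, mRootVec m b i ^ 2 - 2 * (m * (n - 1 - i) * (b i : ℤ)) =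
      (b i : ℤ) ^ 2 - 2 * m * (n - 1) * b i + ((m : ℤ) * i) ^ 2 := by
    intro i; simp only [mRootVec]; ring
  have hsum := sum_congr rfl fun i (_ : i ∈ univ) => hpointwise i
  simp only [sum_sub_distrib, sum_add_distrib, ← mul_sum] at hsum
  rw [hlinear, sq_sum_eq_sum_sq_add_two_mul_sum_Ioi]
  linear_combination hsum

theorem IsSingletonBoard.sum_mRootVec_sq (hm : 0 < m) {b : Fin n → ℕ}
    (hb : IsSingletonBoard m b) :
    ∑ i, mRootVec m b i ^ 2 = (∑ i, (b i : ℤ)) ^ 2 - 2 * m * (n - 1) * ∑ i, (b i : ℤ) +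
      ∑ i : Fin n, ((m : ℤ) * i) ^ 2 - 2 * mRookNum m b 2 := by
  rw [← two_mul_sum_Ioi_add_sum_mRootVec_sq, hb.mRookNum_two hm]
  ring

end

/-- if `m`-level rook equivalent singleton boards `b₁, b₂` with `n`
columns are adjacent in the `m`-level rook equivalence graph, then their
`m`-level root vectors agree except in two positions `i₁ < i₂`, where the two
distinct entries are swapped. -/
theorem stmt8 (m : ℕ) (hm : 0 < m) {n : ℕ} (b₁ b₂ : Fin n → ℕ)
    (hb₁ : IsSingletonBoard m b₁) (hb₂ : IsSingletonBoard m b₂)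
    (heq : MRookEquiv m b₁ b₂)
    (hedge : MovesSquares b₁ b₂ ∨ MovesSquares b₂ b₁) :
    ∃ i₁ i₂ : Fin n, i₁ < i₂ ∧
      mRootVec m b₁ i₁ ≠ mRootVec m b₁ i₂ ∧
      mRootVec m b₂ i₁ = mRootVec m b₁ i₂ ∧
      mRootVec m b₂ i₂ = mRootVec m b₁ i₁ ∧
      ∀ l, l ≠ i₁ → l ≠ i₂ → mRootVec m b₂ l = mRootVec m b₁ l := by
  have hmove := hedge.elim id MovesSquares.symm
  have hsum := hmove.sum_eq
  obtain ⟨p, q, k, hpq, hk, hp, -, hrest⟩ := hmove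
  have hrest' : ∀ l, l ≠ p → l ≠ q → mRootVec m b₁ l = mRootVec m b₂ l :=
    fun l hlp hlq => by simp only [mRootVec, hrest l hlp hlq]
  have hsum' : ∑ i, mRootVec m b₁ i = ∑ i, mRootVec m b₂ i := by
    simp only [mRootVec, Finset.sum_sub_distrib, hsum]
  have hsq : ∑ i, mRootVec m b₁ i ^ 2 = ∑ i, mRootVec m b₂ i ^ 2 := by
    rw [hb₁.sum_mRootVec_sq hm, hb₂.sum_mRootVec_sq hm, hsum, heq 2]
  have hne : mRootVec m b₁ p ≠ mRootVec m b₂ p := by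
    simp only [mRootVec, hp]; omega
  obtain ⟨hswap_p, hswap_q⟩ := eq_swap_of_sum_eq_of_sum_sq_eq hpq hne hrest' hsum' hsq
  have hdistinct : mRootVec m b₁ p ≠ mRootVec m b₁ q := hswap_p ▸ hne
  rcases hpq.lt_or_gt with hlt | hlt
  · exact ⟨p, q, hlt, hdistinct, hswap_p, hswap_q, fun l hlp hlq => (hrest' l hlp hlq).symm⟩
  · exact ⟨q, p, hlt, hdistinct.symm, hswap_q, hswap_p,
      fun l hlq hlp => (hrest' l hlp hlq).symm⟩
end

section
/- Fix a positive integer m. Let B be a singleton board with n columns whose m-level root vector ξ_m(B) has maximum entry M, and suppose the first (leftmost) occurrence of M in ξ_m(B) is in position j. Then the vertex B is connected by a path of edges in the m-level rook equivalence graph G_m(B) to a singleton board B′ whose m-level root vector ξ_m(B′) agrees with ξ_m(B) in the first j positions and is weakly decreasing for indices i ≥ j. -/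
/-!
For a singleton board the `m`-level rook numbers are the coordinates of `∏ i, (X - ξ i)` in the
basis `∏ t < j, (X - m t)` of monic polynomials (the `m`-level factorization theorem, proved by
deleting the last column), so any singleton board whose root vector is a rearrangement of `ξ B`
is `m`-level rook equivalent to `B`.

If the root vector is not weakly decreasing from the leftmost maximum `j` on, let `i` be the
first position `≥ j` followed by a larger entry (so `i > j`), and `q > i` the last position with
`ξ q > ξ i`. Swapping `ξ i` and `ξ q` moves `ξ q - ξ i` squares from column `i` to column `q`;
the choice of `i` and `q` keeps the board singleton, and the move strictly decreases
`∑ t, (n - 1 - t) b t`, so finitely many such moves reach a sorted tail.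
-/

open Finset Polynomial

lemma IsMLevelPlacement.mono {m n : ℕ} {b : Fin n → ℕ} {P Q : Finset (Fin n × ℕ)}
    (hP : IsMLevelPlacement m b P) (hQP : Q ⊆ P) : IsMLevelPlacement m b Q :=
  ⟨fun c hc => hP.1 c (hQP hc), fun c hc d hd hne => hP.2 c (hQP hc) d (hQP hd) hne⟩

lemma IsMLevelPlacement.insert {m n : ℕ} {b : Fin n → ℕ} {P : Finset (Fin n × ℕ)}
    {c : Fin n × ℕ} (hP : IsMLevelPlacement m b P) (hc : c.2 < b c.1)
    (hcP : ∀ d ∈ P, c.1 ≠ d.1 ∧ c.2 / m ≠ d.2 / m) :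
    IsMLevelPlacement m b (insert c P) := by
  classical
  refine ⟨forall_mem_insert _ _ _ |>.2 ⟨hc, hP.1⟩, ?_⟩
  simp only [forall_mem_insert]
  exact ⟨⟨fun h => absurd rfl h, fun d hd _ => hcP d hd⟩,
    fun d hd => ⟨fun _ => ⟨(hcP d hd).1.symm, (hcP d hd).2.symm⟩, hP.2 d hd⟩⟩

lemma IsSingletonBoard.le_mFloor {m n : ℕ} {b : Fin n → ℕ} (hb : IsSingletonBoard m b)
    (hm : 0 < m) {i j : Fin n} (hij : i < j) : b i ≤ mFloor m (b j) := by
  have hj : 0 < (j : ℕ) := by omega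
  set p : Fin n := ⟨j - 1, by omega⟩
  have hip : i ≤ p := Fin.le_def.2 (by simp only [p]; omega)
  have hpj : p ≤ j := Fin.le_def.2 (by simp only [p]; omega)
  refine (hb.1 hip).trans ?_
  by_cases hd : m ∣ b p
  · calc b p = m * (b p / m) := (Nat.mul_div_cancel' hd).symm
      _ ≤ mFloor m (b j) := Nat.mul_le_mul_left m (Nat.div_le_div_right (hb.1 hpj))
  · have hq : b p / m < b j / m :=
      Nat.lt_of_mul_lt_mul_left (hb.2 p j (by simp only [p]; omega) hd)
    calc b p ≤ m * (b p / m + 1) := (Nat.lt_mul_div_succ (b p) hm).le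
      _ ≤ mFloor m (b j) := Nat.mul_le_mul_left m hq

namespace MLevelRook

variable {m n : ℕ}

/-! ### Placements and deletion of the last column -/

open Classical in
noncomputable def placements (m : ℕ) (b : Fin n → ℕ) (k : ℕ) :
    Finset (Finset (Fin n × ℕ)) :=
  ((univ ×ˢ range (univ.sup b)).powersetCard k).filter (IsMLevelPlacement m b)

lemma mem_placements {b : Fin n → ℕ} {k : ℕ} {P : Finset (Fin n × ℕ)} :
    P ∈ placements m b k ↔ IsMLevelPlacement m b P ∧ P.card = k := by
  classical
  simp only [placements, mem_filter, mem_powersetCard]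
  refine ⟨fun h => ⟨h.2, h.1.2⟩, fun ⟨hP, hk⟩ => ⟨⟨fun c hc => ?_, hk⟩, hP⟩⟩
  rw [mem_product, mem_range]
  exact ⟨mem_univ _, (hP.1 c hc).trans_le (le_sup (mem_univ _))⟩

lemma mRookNum_eq_card (m : ℕ) (b : Fin n → ℕ) (k : ℕ) :
    mRookNum m b k = (placements m b k).card := by
  rw [mRookNum, ← Set.ncard_coe_finset]
  congr 1
  ext P
  simp [mem_placements]

lemma mRookNum_zero (m : ℕ) (b : Fin n → ℕ) : mRookNum m b 0 = 1 := by
  rw [mRookNum_eq_card, card_eq_one]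
  refine ⟨∅, eq_singleton_iff_unique_mem.2
    ⟨?_, fun P hP => card_eq_zero.1 (mem_placements.1 hP).2⟩⟩
  simp [mem_placements, IsMLevelPlacement]

lemma mRookNum_eq_zero_of_lt (m : ℕ) (b : Fin n → ℕ) {k : ℕ} (hk : n < k) :
    mRookNum m b k = 0 := by
  rw [mRookNum_eq_card, card_eq_zero, eq_empty_iff_forall_notMem]
  intro P hPk
  obtain ⟨hP, rfl⟩ := mem_placements.1 hPk
  have hcols : P.card ≤ (univ : Finset (Fin n)).card :=
    card_le_card_of_injOn Prod.fst (fun _ _ => mem_coe.2 (mem_univ _))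
      fun c hc d hd hcd => by_contra fun hne => (hP.2 c hc d hd hne).1 hcd
  rw [card_univ, Fintype.card_fin] at hcols
  omega

def castSuccCell (n : ℕ) : Fin n × ℕ ↪ Fin (n + 1) × ℕ :=
  Fin.castSuccEmb.prodMap (Function.Embedding.refl ℕ)

lemma castSuccCell_ne_last (c : Fin n × ℕ) : (castSuccCell n c).1 ≠ Fin.last n :=
  (Fin.castSucc_lt_last c.1).ne

lemma last_notMem_map_castSuccCell (Q : Finset (Fin n × ℕ)) (r : ℕ) :
    (Fin.last n, r) ∉ Q.map (castSuccCell n) := fun h => by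
  obtain ⟨d, -, hd⟩ := mem_map.1 h
  exact castSuccCell_ne_last d (congrArg Prod.fst hd)

lemma isMLevelPlacement_map_castSuccCell {b : Fin (n + 1) → ℕ} {Q : Finset (Fin n × ℕ)} :
    IsMLevelPlacement m b (Q.map (castSuccCell n)) ↔
      IsMLevelPlacement m (b ∘ Fin.castSucc) Q := by
  simp only [IsMLevelPlacement, forall_mem_map, (castSuccCell n).injective.ne_iff]
  simp [castSuccCell]

lemma exists_map_castSuccCell {P : Finset (Fin (n + 1) × ℕ)}
    (h : ∀ c ∈ P, c.1 ≠ Fin.last n) :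
    ∃ Q : Finset (Fin n × ℕ), Q.map (castSuccCell n) = P := by
  classical
  refine ⟨P.preimage _ (castSuccCell n).injective.injOn, ?_⟩
  rw [map_eq_image, image_preimage, filter_true_of_mem]
  exact fun c hc => ⟨(c.1.castPred (h c hc), c.2), by simp [castSuccCell]⟩

lemma filter_insert_last_map_castSuccCell (Q : Finset (Fin n × ℕ)) (r : ℕ) :
    (insert (Fin.last n, r) (Q.map (castSuccCell n))).filter (fun c => c.1 ≠ Fin.last n) =
      Q.map (castSuccCell n) := by
  rw [filter_insert, if_neg (by simp), filter_true_of_mem fun c hc => ?_]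
  obtain ⟨d, -, rfl⟩ := mem_map.1 hc
  exact castSuccCell_ne_last d

lemma card_placements_avoiding_last (b : Fin (n + 1) → ℕ) (k : ℕ) :
    ((placements m b k).filter fun P => ∀ c ∈ P, c.1 ≠ Fin.last n).card =
      mRookNum m (b ∘ Fin.castSucc) k := by
  rw [mRookNum_eq_card]
  refine (card_bij (fun Q _ => Q.map (castSuccCell n)) (fun Q hQ => ?_)
    (fun _ _ _ _ h => map_injective _ h) (fun P hP => ?_)).symm
  · obtain ⟨hQpl, rfl⟩ := mem_placements.1 hQ
    simp only [mem_filter, mem_placements, isMLevelPlacement_map_castSuccCell, card_map,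
      forall_mem_map]
    exact ⟨⟨hQpl, trivial⟩, fun c _ => castSuccCell_ne_last c⟩
  · obtain ⟨⟨hP, hcard⟩, hlast⟩ := (mem_filter.1 hP).imp_left mem_placements.1
    obtain ⟨Q, rfl⟩ := exists_map_castSuccCell hlast
    exact ⟨Q, mem_placements.2 ⟨isMLevelPlacement_map_castSuccCell.1 hP,
      by simpa using hcard⟩, rfl⟩

def freeRows (m h : ℕ) (Q : Finset (Fin n × ℕ)) : Finset ℕ :=
  (range h).filter fun r => ∀ c ∈ Q, r / m ≠ c.2 / m

lemma card_filter_div_mem (hm : 0 < m) {h : ℕ} (L : Finset ℕ)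
    (hL : ∀ ℓ ∈ L, m * ℓ + m ≤ h) :
    ((range h).filter fun r => r / m ∈ L).card = m * L.card := by
  have hmaps : Set.MapsTo (· / m) ((range h).filter fun r => r / m ∈ L : Finset ℕ) L :=
    fun r hr => (mem_filter.1 hr).2
  rw [card_eq_sum_card_fiberwise hmaps, sum_congr rfl fun ℓ hℓ => ?_, sum_const, smul_eq_mul,
    mul_comm]
  have hℓh := hL ℓ hℓ
  have hfiber : ((range h).filter fun r => r / m ∈ L).filter (fun r => r / m = ℓ) =
      Ico (m * ℓ) (m * ℓ + m) := by
    ext r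
    simp only [mem_filter, mem_range, mem_Ico, Nat.div_eq_iff hm, mul_comm ℓ m]
    constructor
    · rintro ⟨-, h1, h2⟩
      omega
    · rintro ⟨h1, h2⟩
      have hrℓ : r / m = ℓ := (Nat.div_eq_iff hm).2 (by rw [mul_comm ℓ m]; omega)
      exact ⟨⟨by omega, hrℓ ▸ hℓ⟩, h1, by omega⟩
  rw [hfiber, Nat.card_Ico]
  omega

lemma card_freeRows (hm : 0 < m) {b : Fin n → ℕ} {Q : Finset (Fin n × ℕ)} {h : ℕ}
    (hQ : IsMLevelPlacement m b Q) (hfit : ∀ c ∈ Q, m * (c.2 / m) + m ≤ h) :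
    ((freeRows m h Q).card : ℤ) = h - m * Q.card := by
  classical
  set L := Q.image fun c => c.2 / m
  have hL : L.card = Q.card :=
    card_image_of_injOn fun c hc d hd hcd => by_contra fun hne => (hQ.2 c hc d hd hne).2 hcd
  have hfree : freeRows m h Q = (range h).filter fun r => r / m ∉ L := by
    ext r
    simp [freeRows, L, eq_comm]
  have hsplit := card_filter_add_card_filter_not (s := range h) (· / m ∈ L)
  rw [card_filter_div_mem hm L fun ℓ hℓ => by
    obtain ⟨c, hc, rfl⟩ := mem_image.1 hℓ
    exact hfit c hc, card_range, hL, ← hfree] at hsplit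
  omega

lemma mul_div_add_le_of_lt_mFloor (hm : 0 < m) {r h : ℕ} (hr : r < mFloor m h) :
    m * (r / m) + m ≤ h := by
  have hdiv : r / m < h / m := (Nat.div_lt_iff_lt_mul hm).2 (by rw [mFloor] at hr; linarith)
  calc m * (r / m) + m = m * (r / m + 1) := by ring
    _ ≤ m * (h / m) := Nat.mul_le_mul_left m hdiv
    _ ≤ h := Nat.mul_div_le h m

lemma insert_last_mem_placements {b : Fin (n + 1) → ℕ} {k r : ℕ} {Q : Finset (Fin n × ℕ)}
    (hQk : Q ∈ placements m (b ∘ Fin.castSucc) k) (hr : r ∈ freeRows m (b (Fin.last n)) Q) :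
    insert (Fin.last n, r) (Q.map (castSuccCell n)) ∈ placements m b (k + 1) := by
  obtain ⟨hQ, rfl⟩ := mem_placements.1 hQk
  obtain ⟨hr, hrQ⟩ := mem_filter.1 hr
  refine mem_placements.2 ⟨(isMLevelPlacement_map_castSuccCell.2 hQ).insert (mem_range.1 hr) ?_,
    by rw [card_insert_of_notMem (last_notMem_map_castSuccCell Q r), card_map]⟩
  simp only [forall_mem_map]
  exact fun d hd => ⟨(castSuccCell_ne_last d).symm, hrQ d hd⟩

lemma exists_eq_insert_last {b : Fin (n + 1) → ℕ} {k : ℕ} {P : Finset (Fin (n + 1) × ℕ)}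
    (hPk : P ∈ placements m b (k + 1)) (hlast : ∃ c ∈ P, c.1 = Fin.last n) :
    ∃ Q ∈ placements m (b ∘ Fin.castSucc) k, ∃ r ∈ freeRows m (b (Fin.last n)) Q,
      insert (Fin.last n, r) (Q.map (castSuccCell n)) = P := by
  obtain ⟨hP, hcard⟩ := mem_placements.1 hPk
  obtain ⟨c, hc, hcl⟩ := hlast
  have hrest : ∀ d ∈ P.erase c, d.1 ≠ Fin.last n := fun d hd hdl =>
    (hP.2 d (mem_of_mem_erase hd) c hc (ne_of_mem_erase hd)).1 (hdl.trans hcl.symm)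
  obtain ⟨Q, hQ⟩ := exists_map_castSuccCell hrest
  refine ⟨Q, mem_placements.2 ⟨?_, ?_⟩, c.2, mem_filter.2 ⟨?_, fun d hd => ?_⟩, ?_⟩
  · exact isMLevelPlacement_map_castSuccCell.1 (hQ ▸ hP.mono (erase_subset c P))
  · rw [← card_map (castSuccCell n), hQ, card_erase_of_mem hc, hcard, Nat.add_sub_cancel]
  · exact mem_range.2 (hcl ▸ hP.1 c hc)
  · have hdP : castSuccCell n d ∈ P.erase c := hQ ▸ mem_map_of_mem _ hd
    exact (hP.2 c hc _ (mem_of_mem_erase hdP) (ne_of_mem_erase hdP).symm).2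
  · rw [hQ, ← hcl, insert_erase hc]

lemma card_placements_using_last (hm : 0 < m) {b : Fin (n + 1) → ℕ}
    (hb : ∀ i : Fin n, b i.castSucc ≤ mFloor m (b (Fin.last n))) (k : ℕ) :
    (((placements m b (k + 1)).filter fun P => ¬ ∀ c ∈ P, c.1 ≠ Fin.last n).card : ℤ) =
      mRookNum m (b ∘ Fin.castSucc) k * ((b (Fin.last n) : ℤ) - m * k) := by
  classical
  have hbij : ((placements m (b ∘ Fin.castSucc) k).sigma
      fun Q => freeRows m (b (Fin.last n)) Q).card =
      ((placements m b (k + 1)).filter fun P => ¬ ∀ c ∈ P, c.1 ≠ Fin.last n).card := by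
    refine card_bij (fun x _ => insert (Fin.last n, x.2) (x.1.map (castSuccCell n)))
      (fun ⟨Q, r⟩ hx => ?_) (fun ⟨Q, r⟩ _ ⟨Q', r'⟩ _ h => ?_) (fun P hP => ?_)
    · obtain ⟨hQ, hr⟩ := mem_sigma.1 hx
      exact mem_filter.2 ⟨insert_last_mem_placements hQ hr,
        fun h => h _ (mem_insert_self _ _) rfl⟩
    · have hQ := congrArg (filter fun c => c.1 ≠ Fin.last n) h
      simp only [filter_insert_last_map_castSuccCell] at hQ
      obtain rfl := map_injective _ hQ
      have hr : (Fin.last n, r) ∈ insert (Fin.last n, r') (Q.map (castSuccCell n)) :=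
        h ▸ mem_insert_self _ _
      obtain ⟨-, rfl⟩ := Prod.ext_iff.1 ((mem_insert.1 hr).resolve_right
        (last_notMem_map_castSuccCell Q r))
      rfl
    · obtain ⟨hP, hlast⟩ := mem_filter.1 hP
      push Not at hlast
      obtain ⟨Q, hQ, r, hr, rfl⟩ := exists_eq_insert_last hP hlast
      exact ⟨⟨Q, r⟩, mem_sigma.2 ⟨hQ, hr⟩, rfl⟩
  rw [← hbij, card_sigma, Nat.cast_sum, mRookNum_eq_card, ← nsmul_eq_mul, ← sum_const]
  refine sum_congr rfl fun Q hQk => ?_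
  obtain ⟨hQ, rfl⟩ := mem_placements.1 hQk
  exact card_freeRows hm hQ fun c hc =>
    mul_div_add_le_of_lt_mFloor hm ((hQ.1 c hc).trans_le (hb c.1))

/-- A placement either avoids the last column or has one rook there, in a row whose level is
not used by the other `k` rooks; `hb` makes each of those `k` levels lie inside the last
column, which leaves `b (last n) - m k` rows. -/
lemma mRookNum_succ (hm : 0 < m) {b : Fin (n + 1) → ℕ}
    (hb : ∀ i : Fin n, b i.castSucc ≤ mFloor m (b (Fin.last n))) (k : ℕ) :
    (mRookNum m b (k + 1) : ℤ) = mRookNum m (b ∘ Fin.castSucc) (k + 1) +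
      mRookNum m (b ∘ Fin.castSucc) k * ((b (Fin.last n) : ℤ) - m * k) := by
  rw [← card_placements_avoiding_last, ← card_placements_using_last hm hb, mRookNum_eq_card,
    ← card_filter_add_card_filter_not (s := placements m b (k + 1))
      (fun P => ∀ c ∈ P, c.1 ≠ Fin.last n), Nat.cast_add]

/-! ### The factorization theorem -/

lemma eq_zero_of_sum_C_mul_eq_zero {R : Type*} [Semiring R] {p : ℕ → R[X]}
    (hmonic : ∀ j, (p j).Monic) (hdeg : ∀ j, (p j).natDegree = j) :
    ∀ (N : ℕ) (a : ℕ → R), ∑ k ∈ range (N + 1), C (a k) * p (N - k) = 0 →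
      ∀ k ≤ N, a k = 0 := by
  intro N
  induction N with
  | zero =>
    intro a h k hk
    obtain rfl : k = 0 := by omega
    simpa [eq_one_of_monic_natDegree_zero (hmonic 0) (hdeg 0)] using h
  | succ N ih =>
    intro a h
    have ha0 : a 0 = 0 := by
      have htop := congrArg (coeff · (N + 1)) h
      have hlead := (hmonic (N + 1)).coeff_natDegree
      rw [hdeg] at hlead
      simp only [finsetSum_coeff, coeff_C_mul, coeff_zero] at htop
      rwa [sum_eq_single 0 (fun k hk hk0 => ?_) (by simp), Nat.sub_zero, hlead, mul_one] at htop
      rw [coeff_eq_zero_of_natDegree_lt (by rw [hdeg]; omega), mul_zero]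
    rw [sum_range_succ', ha0, C_0, zero_mul, add_zero] at h
    rintro (_ | k) hk
    · exact ha0
    · exact ih (fun k => a (k + 1)) (by simpa using h) k (by omega)

noncomputable def fallingPoly (m j : ℕ) : ℤ[X] :=
  ∏ t ∈ range j, (X - C ((m : ℤ) * t))

lemma fallingPoly_monic (m j : ℕ) : (fallingPoly m j).Monic :=
  monic_prod_of_monic _ _ fun _ _ => monic_X_sub_C _

lemma natDegree_fallingPoly (m j : ℕ) : (fallingPoly m j).natDegree = j := by
  rw [fallingPoly, natDegree_prod_of_monic _ _ fun _ _ => monic_X_sub_C _]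
  simp only [natDegree_X_sub_C, sum_const, card_range, smul_eq_mul, mul_one]

noncomputable def rookPoly (m : ℕ) (b : Fin n → ℕ) : ℤ[X] :=
  ∑ k ∈ range (n + 1), C (mRookNum m b k : ℤ) * fallingPoly m (n - k)

lemma rookPoly_succ (hm : 0 < m) {b : Fin (n + 1) → ℕ}
    (hb : ∀ i : Fin n, b i.castSucc ≤ mFloor m (b (Fin.last n))) :
    rookPoly m b = rookPoly m (b ∘ Fin.castSucc) * (X - C (mRootVec m b (Fin.last n))) := by
  set F := b ∘ Fin.castSucc
  set f : ℕ → ℤ[X] := fun k => C (mRookNum m F k : ℤ) * fallingPoly m (n + 1 - k)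
  have hshift : ∑ k ∈ range (n + 1), C (mRookNum m F (k + 1) : ℤ) * fallingPoly m (n - k) +
      fallingPoly m (n + 1) = ∑ k ∈ range (n + 1), f k := by
    calc _ = ∑ k ∈ range (n + 1), f (k + 1) + f 0 := by
          simp only [f, mRookNum_zero, Nat.add_sub_add_right, Nat.sub_zero, Nat.cast_one, C_1,
            one_mul]
      _ = ∑ k ∈ range (n + 2), f k := (sum_range_succ' f (n + 1)).symm
      _ = ∑ k ∈ range (n + 1), f k := by
          rw [sum_range_succ f (n + 1)]
          simp only [f, mRookNum_eq_zero_of_lt m F (Nat.lt_succ_self n), Nat.cast_zero, C_0,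
            zero_mul, add_zero]
  have hterm : ∀ k ∈ range (n + 1), f k + C (mRookNum m F k : ℤ) *
      C ((b (Fin.last n) : ℤ) - m * k) * fallingPoly m (n - k) =
      C (mRookNum m F k : ℤ) * fallingPoly m (n - k) * (X - C (mRootVec m b (Fin.last n))) := by
    intro k hk
    have hkn : k ≤ n := Nat.lt_succ_iff.1 (mem_range.1 hk)
    have hroot : mRootVec m b (Fin.last n) =
        m * ((n - k : ℕ) : ℤ) - (b (Fin.last n) - m * k) := by
      rw [mRootVec, Nat.cast_sub hkn, Fin.val_last]
      ring
    simp only [f, Nat.succ_sub hkn, fallingPoly, prod_range_succ, hroot, C_sub]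
    ring
  calc rookPoly m b
      = ∑ k ∈ range (n + 1), C (mRookNum m F (k + 1) : ℤ) * fallingPoly m (n - k) +
          fallingPoly m (n + 1) + ∑ k ∈ range (n + 1), C (mRookNum m F k : ℤ) *
            C ((b (Fin.last n) : ℤ) - m * k) * fallingPoly m (n - k) := by
        simp only [rookPoly, sum_range_succ' _ (n + 1), mRookNum_succ hm hb, mRookNum_zero,
          Nat.add_sub_add_right, Nat.sub_zero, C_add, C_mul, add_mul, sum_add_distrib,
          Nat.cast_one, C_1, one_mul, F]
        ring
    _ = rookPoly m F * (X - C (mRootVec m b (Fin.last n))) := by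
        rw [hshift, ← sum_add_distrib, sum_congr rfl hterm, rookPoly, sum_mul]

lemma rookPoly_eq_prod (hm : 0 < m) :
    ∀ {n : ℕ} (b : Fin n → ℕ), (∀ i j, i < j → b i ≤ mFloor m (b j)) →
      rookPoly m b = ∏ i, (X - C (mRootVec m b i)) := by
  intro n
  induction n with
  | zero => simp [rookPoly, mRookNum_zero, fallingPoly]
  | succ n ih =>
    intro b hb
    rw [rookPoly_succ hm fun i => hb _ _ (Fin.castSucc_lt_last i),
      ih (b ∘ Fin.castSucc) fun i j hij => hb _ _ (Fin.castSucc_lt_castSucc_iff.2 hij),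
      Fin.prod_univ_castSucc]
    rfl

lemma mRookEquiv_of_rookPoly_eq {b c : Fin n → ℕ} (h : rookPoly m b = rookPoly m c) :
    MRookEquiv m b c := by
  intro k
  rcases le_or_gt k n with hk | hk
  · have hdiff := eq_zero_of_sum_C_mul_eq_zero (fallingPoly_monic m) (natDegree_fallingPoly m) n
      (fun k => (mRookNum m b k : ℤ) - mRookNum m c k)
      (by simp only [C_sub, sub_mul, sum_sub_distrib]; rw [← rookPoly, ← rookPoly, h, sub_self])
      k hk
    exact_mod_cast sub_eq_zero.1 hdiff
  · rw [mRookNum_eq_zero_of_lt m b hk, mRookNum_eq_zero_of_lt m c hk]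

lemma mRookEquiv_of_rootVec_eq_comp (hm : 0 < m) {b c : Fin n → ℕ} (hb : IsSingletonBoard m b)
    (hc : IsSingletonBoard m c) (σ : Equiv.Perm (Fin n)) (h : mRootVec m c = mRootVec m b ∘ σ) :
    MRookEquiv m c b := by
  apply mRookEquiv_of_rookPoly_eq
  rw [rookPoly_eq_prod hm b fun _ _ => hb.le_mFloor hm,
    rookPoly_eq_prod hm c fun _ _ => hc.le_mFloor hm, h]
  exact Equiv.prod_comp σ fun i => X - C (mRootVec m b i)

/-! ### The singleton condition on root vectors -/

lemma mFloorZ_eq_mul_ediv (m : ℕ) (x : ℤ) : mFloorZ m x = m * (x / m) := by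
  rw [mFloorZ, Int.emod_def]
  ring

lemma mFloorZ_mono (hm : 0 < m) : Monotone (mFloorZ m) := fun x y hxy => by
  rw [mFloorZ_eq_mul_ediv, mFloorZ_eq_mul_ediv]
  exact mul_le_mul_of_nonneg_left (Int.ediv_le_ediv (by exact_mod_cast hm) hxy) (by positivity)

lemma lt_mFloorZ_add (hm : 0 < m) (x : ℤ) : x < mFloorZ m x + m := by
  have := Int.emod_lt_of_pos x (by exact_mod_cast hm : (0 : ℤ) < m)
  rw [mFloorZ]
  omega

lemma mFloorZ_eq_of_le_of_lt (hm : 0 < m) {x t : ℤ} (ht : (m : ℤ) ∣ t) (h1 : t ≤ x)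
    (h2 : x < t + m) : mFloorZ m x = t := by
  obtain ⟨s, rfl⟩ := ht
  rw [mFloorZ_eq_mul_ediv, ((Int.ediv_emod_unique (by exact_mod_cast hm)).2
    ⟨sub_add_cancel x _, sub_nonneg.2 h1, by linarith⟩).1]

/-- `mFloorZ m x + m` is the least multiple of `m` above `x`, so both sides say that `c` is at
least the least multiple of `m` that is `≥ a`. -/
lemma singleton_adjacent_iff (hm : 0 < m) (a c : ℕ) (i : ℤ) :
    (a ≤ c ∧ (¬ m ∣ a → mFloor m a < mFloor m c)) ↔
      (m : ℤ) * (i + 1) - c ≤ mFloorZ m (m * i - a) + m := by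
  by_cases hd : m ∣ a
  · obtain ⟨q, rfl⟩ := hd
    rw [mFloorZ_eq_of_le_of_lt hm ⟨i - q, by push_cast; ring⟩ le_rfl (by linarith)]
    simp only [dvd_mul_right, not_true_eq_false, false_imp_iff, and_true]
    constructor <;> intro h
    · linarith [(Nat.cast_le (α := ℤ)).2 h]
    · exact_mod_cast (by linarith : ((m * q : ℕ) : ℤ) ≤ c)
  · have hr : 0 < a % m := Nat.pos_of_ne_zero fun h => hd (Nat.dvd_of_mod_eq_zero h)
    obtain ⟨q, r, hr, hr', rfl⟩ : ∃ q r, 0 < r ∧ r < m ∧ a = m * q + r :=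
      ⟨a / m, a % m, hr, Nat.mod_lt a hm, (Nat.div_add_mod a m).symm⟩
    have hq : (m * q + r) / m = q := by rw [Nat.mul_add_div hm, Nat.div_eq_of_lt hr', add_zero]
    simp only [hd, not_false_eq_true, true_imp_iff, mFloor, hq]
    rw [mFloorZ_eq_of_le_of_lt hm (t := m * (i - q - 1)) (dvd_mul_right _ _)
      (by push_cast; nlinarith) (by push_cast; nlinarith), Nat.mul_lt_mul_left hm,
      Nat.lt_iff_add_one_le, Nat.le_div_iff_mul_le hm]
    constructor
    · rintro ⟨-, h⟩
      have hc : (((q + 1) * m : ℕ) : ℤ) ≤ c := by exact_mod_cast h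
      push_cast at hc
      linarith
    · intro h
      have hc : (q + 1) * m ≤ c := by
        exact_mod_cast (by push_cast; linarith : (((q + 1) * m : ℕ) : ℤ) ≤ c)
      exact ⟨by nlinarith, hc⟩

lemma monotone_iff_le_of_val_eq_succ {α : Type*} [Preorder α] {f : Fin n → α} :
    Monotone f ↔ ∀ i j : Fin n, (j : ℕ) = i + 1 → f i ≤ f j := by
  cases n with
  | zero => exact ⟨fun _ i => i.elim0, fun _ i => i.elim0⟩
  | succ n =>
    rw [Fin.monotone_iff_le_succ]
    refine ⟨fun h i j hij => ?_, fun h i => h _ _ (by simp)⟩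
    obtain ⟨i, rfl⟩ : ∃ i' : Fin n, i = i'.castSucc := ⟨⟨i, by omega⟩, rfl⟩
    obtain rfl : j = i.succ := Fin.ext (by simp [hij])
    exact h i

lemma isSingletonBoard_iff_rootVec (hm : 0 < m) {b : Fin n → ℕ} :
    IsSingletonBoard m b ↔
      ∀ i j : Fin n, (j : ℕ) = i + 1 → mRootVec m b j ≤ mFloorZ m (mRootVec m b i) + m := by
  have hadj : ∀ i j : Fin n, (j : ℕ) = i + 1 →
      (mRootVec m b j ≤ mFloorZ m (mRootVec m b i) + m ↔
        b i ≤ b j ∧ (¬ m ∣ b i → mFloor m (b i) < mFloor m (b j))) := fun i j hij => by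
    rw [singleton_adjacent_iff hm _ _ (i : ℤ), mRootVec, mRootVec, hij, Nat.cast_succ]
  rw [IsSingletonBoard, monotone_iff_le_of_val_eq_succ]
  exact ⟨fun h i j hij => (hadj i j hij).2 ⟨h.1 i j hij, h.2 i j hij⟩,
    fun h => ⟨fun i j hij => ((hadj i j hij).1 (h i j hij)).1,
      fun i j hij => ((hadj i j hij).1 (h i j hij)).2⟩⟩

lemma isSingletonBoard_of_rootVec_adjacent (hm : 0 < m) {b c : Fin n → ℕ}
    (hb : IsSingletonBoard m b)
    (h : ∀ i j : Fin n, (j : ℕ) = i + 1 → mRootVec m c j ≤ mRootVec m c i ∨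
      (mRootVec m b i ≤ mRootVec m c i ∧ mRootVec m c j ≤ mRootVec m b j)) :
    IsSingletonBoard m c := by
  rw [isSingletonBoard_iff_rootVec hm] at hb ⊢
  intro i j hij
  rcases h i j hij with hdesc | ⟨hi, hj⟩
  · exact hdesc.trans (lt_mFloorZ_add hm _).le
  · exact hj.trans ((hb i j hij).trans ((add_le_add_iff_right _).2 (mFloorZ_mono hm hi)))

/-! ### Sorting the tail by swaps -/

lemma mRootVec_le (b : Fin n → ℕ) (t : Fin n) : mRootVec m b t ≤ m * t := by
  simp [mRootVec]

lemma exists_mRootVec_eq {ξ : Fin n → ℤ} (h : ∀ t, ξ t ≤ m * t) :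
    ∃ c : Fin n → ℕ, mRootVec m c = ξ :=
  ⟨fun t => (m * t - ξ t).toNat, funext fun t => by
    rw [mRootVec, Int.toNat_of_nonneg (sub_nonneg.2 (h t))]
    ring⟩

lemma movesSquares_of_mRootVec_swap {b c : Fin n → ℕ} {i q : Fin n} (hiq : i ≠ q)
    (hlt : mRootVec m b i < mRootVec m b q) (hc : mRootVec m c = mRootVec m b ∘ Equiv.swap i q) :
    MovesSquares b c := by
  have hci := congrFun hc i
  have hcq := congrFun hc q
  simp only [Function.comp, Equiv.swap_apply_left, Equiv.swap_apply_right, mRootVec] at hci hcq hlt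
  refine ⟨i, q, b i - c i, hiq, by omega, by omega, by omega, fun l hli hlq => ?_⟩
  have hcl := congrFun hc l
  simp only [Function.comp, Equiv.swap_apply_of_ne_of_ne hli hlq, mRootVec] at hcl
  omega

def heightMoment (b : Fin n → ℕ) : ℕ :=
  ∑ t, (t.rev : ℕ) * b t

lemma heightMoment_lt_of_mRootVec_swap {b c : Fin n → ℕ} {i q : Fin n} (hiq : i < q)
    (hlt : mRootVec m b i < mRootVec m b q) (hc : mRootVec m c = mRootVec m b ∘ Equiv.swap i q) :
    heightMoment c < heightMoment b := by
  have hcol : ∀ t, (b t : ℤ) - c t = mRootVec m b (Equiv.swap i q t) - mRootVec m b t := by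
    intro t
    rw [← Function.comp_apply (f := mRootVec m b), ← hc, mRootVec, mRootVec]
    ring
  have hdiff : (heightMoment b : ℤ) - heightMoment c =
      ((i.rev : ℕ) - (q.rev : ℕ) : ℤ) * (mRootVec m b q - mRootVec m b i) := by
    push_cast [heightMoment]
    rw [← sum_sub_distrib]
    simp_rw [← mul_sub, hcol]
    rw [Fintype.sum_eq_add i q hiq.ne fun t ht => by
      rw [Equiv.swap_apply_of_ne_of_ne ht.1 ht.2, sub_self, mul_zero]]
    simp only [Equiv.swap_apply_left, Equiv.swap_apply_right]
    ring
  have hrev : (q.rev : ℕ) < i.rev := Fin.rev_lt_rev.2 hiq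
  have hpos : (0 : ℤ) < ((i.rev : ℕ) - (q.rev : ℕ) : ℤ) *
      (mRootVec m b q - mRootVec m b i) := mul_pos (by omega) (by omega)
  omega

lemma swap_adjacent {f : Fin n → ℤ} {p i q : Fin n} (hpi : (i : ℕ) = p + 1) (hiq : i < q)
    (hlt : f i < f q) (hqp : f q ≤ f p) (htail : ∀ u, q < u → f u ≤ f i) :
    ∀ s t : Fin n, (t : ℕ) = s + 1 → (f ∘ Equiv.swap i q) t ≤ (f ∘ Equiv.swap i q) s ∨
      (f s ≤ (f ∘ Equiv.swap i q) s ∧ (f ∘ Equiv.swap i q) t ≤ f t) := by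
  intro s t hst
  have hiq' := Fin.lt_def.1 hiq
  simp only [Function.comp, Equiv.swap_apply_def]
  split_ifs <;> subst_vars <;> first
    | exact Or.inr ⟨le_rfl, le_rfl⟩
    | exact Or.inr ⟨hlt.le, le_rfl⟩
    | exact Or.inr ⟨le_rfl, hlt.le⟩
    | exact Or.inr ⟨hlt.le, hlt.le⟩
    | exact Or.inl (htail _ (Fin.lt_def.2 (by omega)))
    | (obtain rfl : s = p := Fin.ext (by omega)
       exact Or.inl hqp)
    | (exfalso; omega)

lemma exists_adj_mRootVec_swap (hm : 0 < m) {B : SingletonBoard m n}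
    (C : {C : SingletonBoard m n // MRookEquiv m C.1 B.1}) {p i q : Fin n}
    (hpi : (i : ℕ) = p + 1) (hiq : i < q) (hlt : mRootVec m C.1.1 i < mRootVec m C.1.1 q)
    (hqp : mRootVec m C.1.1 q ≤ mRootVec m C.1.1 p)
    (htail : ∀ u, q < u → mRootVec m C.1.1 u ≤ mRootVec m C.1.1 i) :
    ∃ D, (mRookEquivGraph m B).Adj C D ∧
      mRootVec m D.1.1 = mRootVec m C.1.1 ∘ Equiv.swap i q ∧
      heightMoment D.1.1 < heightMoment C.1.1 := by
  have hbound : ∀ t, (mRootVec m C.1.1 ∘ Equiv.swap i q) t ≤ m * t := by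
    intro t
    have hmi : (m : ℤ) * p ≤ m * i := by gcongr; omega
    have hmq : (m : ℤ) * i ≤ m * q := by gcongr; exact Fin.lt_def.1 hiq |>.le
    simp only [Function.comp, Equiv.swap_apply_def]
    split_ifs with hti htq
    · subst hti
      linarith [mRootVec_le (m := m) C.1.1 p]
    · subst htq
      linarith [mRootVec_le (m := m) C.1.1 i]
    · exact mRootVec_le _ _
  obtain ⟨c, hc⟩ := exists_mRootVec_eq hbound
  have hcs : IsSingletonBoard m c :=
    isSingletonBoard_of_rootVec_adjacent hm C.1.2 (hc ▸ swap_adjacent hpi hiq hlt hqp htail)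
  refine ⟨⟨⟨c, hcs⟩, fun k => (mRookEquiv_of_rootVec_eq_comp hm C.1.2 hcs _ hc k).trans (C.2 k)⟩,
    (SimpleGraph.fromRel_adj _ _ _).2
      ⟨fun hCD => ?_, Or.inl (movesSquares_of_mRootVec_swap hiq.ne hlt hc)⟩,
    hc, heightMoment_lt_of_mRootVec_swap hiq hlt hc⟩
  have hci := congrFun hc i
  have hCc : C.1.1 = c := congrArg (fun D => D.1.1) hCD
  rw [← hCc, Function.comp_apply, Equiv.swap_apply_left] at hci
  exact hlt.ne hci

lemma exists_swap_of_not_antitoneOn {f : Fin n → ℤ} {j : Fin n} (hj : ∀ t, f t ≤ f j)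
    (h : ¬ AntitoneOn f (Set.Ici j)) :
    ∃ p i q : Fin n, (i : ℕ) = p + 1 ∧ j ≤ p ∧ i < q ∧ f i < f q ∧ f q ≤ f p ∧
      ∀ u, q < u → f u ≤ f i := by
  have hbad : {t | j ≤ t ∧ ∃ u, t < u ∧ f t < f u}.Nonempty := by
    simp only [AntitoneOn, Set.mem_Ici, not_forall, not_le] at h
    obtain ⟨a, ha, b, -, hab, hlt⟩ := h
    exact ⟨a, ha, b, lt_of_le_of_ne hab (by rintro rfl; exact lt_irrefl _ hlt), hlt⟩
  obtain ⟨i, ⟨hji, u, hiu, hfiu⟩, hmin⟩ := wellFounded_lt.has_min _ hbad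
  have hji_val : (j : ℕ) < i :=
    Fin.lt_def.1 (lt_of_le_of_ne hji (by rintro rfl; exact (hj u).not_gt hfiu))
  set p : Fin n := ⟨i - 1, by omega⟩
  have hpi : (i : ℕ) = p + 1 := by simp only [p]; omega
  have hjp : j ≤ p := Fin.le_def.2 (by simp only [p]; omega)
  have hp : ∀ u, p < u → f u ≤ f p := fun u hpu => not_lt.1 fun hlt =>
    hmin p ⟨hjp, u, hpu, hlt⟩ (Fin.lt_def.2 (by omega))
  obtain ⟨q, ⟨hiq, hfiq⟩, hmax⟩ :=
    wellFounded_gt.has_min {u | i < u ∧ f i < f u} ⟨u, hiu, hfiu⟩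
  exact ⟨p, i, q, hpi, hjp, hiq, hfiq, hp q (Fin.lt_def.2 (by have := Fin.lt_def.1 hiq; omega)),
    fun u hqu => not_lt.1 fun hlt => hmax u ⟨hiq.trans hqu, hlt⟩ hqu⟩

theorem exists_reachable_antitoneOn_Ici (hm : 0 < m) {B : SingletonBoard m n}
    (C : {C : SingletonBoard m n // MRookEquiv m C.1 B.1}) (j : Fin n)
    (hj : ∀ t, mRootVec m C.1.1 t ≤ mRootVec m C.1.1 j) :
    ∃ D, (mRookEquivGraph m B).Reachable C D ∧
      (∀ i ≤ j, mRootVec m D.1.1 i = mRootVec m C.1.1 i) ∧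
      AntitoneOn (mRootVec m D.1.1) (Set.Ici j) := by
  induction hN : heightMoment C.1.1 using Nat.strong_induction_on generalizing C with
  | _ N ih =>
  by_cases hsorted : AntitoneOn (mRootVec m C.1.1) (Set.Ici j)
  · exact ⟨C, .refl C, fun _ _ => rfl, hsorted⟩
  obtain ⟨p, i, q, hpi, hjp, hiq, hlt, hqp, htail⟩ := exists_swap_of_not_antitoneOn hj hsorted
  obtain ⟨D, hCD, hD, hDC⟩ := exists_adj_mRootVec_swap hm C hpi hiq hlt hqp htail
  have hfix : ∀ t ≤ j, mRootVec m D.1.1 t = mRootVec m C.1.1 t := fun t ht => by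
    have hti : t < i := Fin.lt_def.2 (by have := Fin.le_def.1 (ht.trans hjp); omega)
    rw [hD, Function.comp_apply, Equiv.swap_apply_of_ne_of_ne hti.ne (hti.trans hiq).ne]
  obtain ⟨E, hDE, hEj, hE⟩ := ih _ (hN ▸ hDC) D
    (fun t => by rw [hfix j le_rfl, hD]; exact hj _) rfl
  exact ⟨E, hCD.reachable.trans hDE, fun t ht => (hEj t ht).trans (hfix t ht), hE⟩

end MLevelRook

theorem stmt10_general (m : ℕ) (hm : 0 < m) {n : ℕ} (B : SingletonBoard m n)
    (M : ℤ) (j : Fin n)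
    (hmax : ∀ i, mRootVec m B.1 i ≤ M)
    (hj : mRootVec m B.1 j = M) :
    ∃ B' : {C : SingletonBoard m n // MRookEquiv m C.1 B.1},
      (mRookEquivGraph m B).Reachable ⟨B, fun _ => rfl⟩ B' ∧
      (∀ i ≤ j, mRootVec m B'.1.1 i = mRootVec m B.1 i) ∧
      (∀ i₁ i₂ : Fin n, j ≤ i₁ → i₁ ≤ i₂ →
        mRootVec m B'.1.1 i₂ ≤ mRootVec m B'.1.1 i₁) := by
  obtain ⟨D, hreach, hfix, hsorted⟩ :=
    MLevelRook.exists_reachable_antitoneOn_Ici hm ⟨B, fun _ => rfl⟩ j fun t => hj ▸ hmax t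
  exact ⟨D, hreach, hfix, fun i₁ i₂ h₁ h₁₂ => hsorted h₁ (h₁.trans h₁₂) h₁₂⟩

/-- every singleton board is connected by a path in its `m`-level
rook equivalence graph to a singleton board whose `m`-level root vector agrees
with the original in the first `j` positions (where position `j`, 0-indexed,
holds the leftmost maximum entry `M`) and is weakly decreasing from position `j`
on. -/
theorem stmt10 (m : ℕ) (hm : 0 < m) {n : ℕ} (B : SingletonBoard m n)
    (M : ℤ) (j : Fin n)
    (hmax : ∀ i, mRootVec m B.1 i ≤ M)
    (hj : mRootVec m B.1 j = M)
    (hfirst : ∀ i < j, mRootVec m B.1 i ≠ M) :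
    ∃ B' : {C : SingletonBoard m n // MRookEquiv m C.1 B.1},
      (mRookEquivGraph m B).Reachable ⟨B, fun _ => rfl⟩ B' ∧
      (∀ i ≤ j, mRootVec m B'.1.1 i = mRootVec m B.1 i) ∧
      (∀ i₁ i₂ : Fin n, j ≤ i₁ → i₁ ≤ i₂ →
        mRootVec m B'.1.1 i₂ ≤ mRootVec m B'.1.1 i₁) :=
  stmt10_general m hm B M j hmax hj
end
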